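/- arXiv:2409.17100 — 9 statements merged into one kernel-verified Lean document; each statement's English description precedes it below -/
import Mathlib

section
/- Let Ā be an n×n structured (zero/nonzero pattern) matrix with digraph G(Ā). Then the maximum size of a set J ⊆ [n] such that the principal submatrix pattern Ā(J,J) has generic rank |J| equals the maximum number of vertices of G(Ā) that can be covered by a collection of vertex-disjoint directed cycles. -/
noncomputable section
open Matrix

/-- Realization of a structured (zero/nonzero pattern) matrix: the vector `θ` of
values of the free parameters at the `*` positions, zeros elsewhere. -/
def toMat {α β : Type*} (P : α → β → Bool)
    (θ : {ij : α × β // P ij.1 ij.2 = true} → ℝ) : Matrix α β ℝ :=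
  Matrix.of fun i j => if h : P i j = true then θ ⟨(i, j), h⟩ else 0

/-- Generic rank of a structured matrix: the maximum rank over all realizations. -/
noncomputable def grank {α β : Type*} [Fintype β] (P : α → β → Bool) : ℕ :=
  sSup {r | ∃ θ, (toMat P θ).rank = r}

/-- The vertex set `S` of the digraph `G(P)` (with edge x_i → x_j iff `P j i = *`)
is covered by a collection of vertex-disjoint directed cycles. -/
def CoveredByCycles {α : Type*} (P : α → α → Bool) (S : Finset α) : Prop :=
  ∃ σ : Equiv.Perm α, ∀ i ∈ S, σ i ∈ S ∧ P (σ i) i = true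

/-- `v(P)`: the maximum number of vertices of `G(P)` coverable by vertex-disjoint
directed cycles. -/
noncomputable def cycleCoverNum {α : Type*} (P : α → α → Bool) : ℕ :=
  sSup {k | ∃ S : Finset α, CoveredByCycles P S ∧ S.card = k}

/-- Auxiliary: full generic rank of a square pattern iff a permutation hits only stars. -/
lemma grank_eq_card_iff {α : Type*} [Fintype α] [DecidableEq α] (Q : α → α → Bool) :
    grank Q = Fintype.card α ↔ ∃ σ : Equiv.Perm α, ∀ i, Q (σ i) i = true := by
  have hbdd : BddAbove {r | ∃ θ, (toMat Q θ).rank = r} := by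
    refine ⟨Fintype.card α, ?_⟩
    rintro r ⟨θ, rfl⟩
    exact Matrix.rank_le_card_width _
  have hne : {r | ∃ θ, (toMat Q θ).rank = r}.Nonempty := ⟨(toMat Q 0).rank, 0, rfl⟩
  constructor
  · intro h
    have hmem := Nat.sSup_mem hne hbdd
    rw [grank] at h
    rw [h] at hmem
    obtain ⟨θ, hθ⟩ := hmem
    -- full rank square matrix has nonzero determinant
    set M := toMat Q θ with hMdef
    have hsurj : Function.Surjective M.mulVec := by
      have htop : LinearMap.range M.mulVecLin = ⊤ := by
        apply Submodule.eq_top_of_finrank_eq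
        rw [Module.finrank_pi]
        exact hθ
      intro v
      obtain ⟨w, hw⟩ := (LinearMap.range_eq_top.mp htop) v
      exact ⟨w, hw⟩
    have hunit : IsUnit M := Matrix.mulVec_surjective_iff_isUnit.mp hsurj
    have hdet : M.det ≠ 0 := by
      have := Matrix.isUnit_iff_isUnit_det M |>.mp hunit
      exact this.ne_zero
    -- expand determinant
    by_contra hcon
    push_neg at hcon
    apply hdet
    rw [Matrix.det_apply]
    apply Finset.sum_eq_zero
    intro σ _
    obtain ⟨i, hi⟩ := hcon σ
    have : M (σ i) i = 0 := by
      simp only [hMdef, toMat, Matrix.of_apply]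
      rw [dif_neg hi]
    have hp : ∏ i, M (σ i) i = 0 := Finset.prod_eq_zero (Finset.mem_univ i) this
    rw [hp, smul_zero]
  · rintro ⟨σ, hσ⟩
    -- realization: permutation matrix
    set θ : {ij : α × α // Q ij.1 ij.2 = true} → ℝ :=
      fun p => if p.1.1 = σ p.1.2 then 1 else 0 with hθdef
    have hM : toMat Q θ = (σ.permMatrix ℝ)ᵀ := by
      ext i j
      simp only [toMat, Matrix.of_apply, Matrix.transpose_apply,
        Equiv.Perm.permMatrix, PEquiv.toMatrix_apply, Equiv.toPEquiv_apply,
        Option.mem_def, Option.some.injEq]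
      by_cases h : Q i j = true
      · rw [dif_pos h]
        simp only [hθdef]
        by_cases h2 : i = σ j
        · rw [if_pos h2, if_pos h2.symm]
        · rw [if_neg h2, if_neg (fun e => h2 e.symm)]
      · rw [dif_neg h]
        have h2 : i ≠ σ j := fun e => h (e ▸ hσ j)
        rw [if_neg (fun e => h2 e.symm)]
    have hunit : IsUnit ((σ.permMatrix ℝ)ᵀ) := by
      rw [Matrix.isUnit_iff_isUnit_det, Matrix.det_transpose, Matrix.det_permutation]
      rcases Int.units_eq_one_or (Equiv.Perm.sign σ) with h | h <;> simp [h]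
    have hrank : (toMat Q θ).rank = Fintype.card α := by
      rw [hM]
      exact Matrix.rank_of_isUnit _ hunit
    refine le_antisymm (csSup_le hne ?_) (le_csSup hbdd ⟨θ, hrank⟩)
    rintro r ⟨θ', rfl⟩
    exact Matrix.rank_le_card_width _

/-- the maximum size of a set J ⊆ [n] such that the principal
submatrix pattern Ā(J,J) has full generic rank |J| equals the maximum number of
vertices of G(Ā) coverable by vertex-disjoint directed cycles. -/
theorem max_generic_full_rank_principal_eq_cycleCoverNum
    (n : ℕ) (P : Fin n → Fin n → Bool) :
    sSup {k | ∃ J : Finset (Fin n), J.card = k ∧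
        grank (fun i j : ↥J => P (i : Fin n) (j : Fin n)) = k} =
      cycleCoverNum P := by
  rw [cycleCoverNum]
  congr 1
  ext k
  constructor
  · rintro ⟨J, hJcard, hJ⟩
    have hcard : Fintype.card ↥J = k := by rw [Fintype.card_coe]; exact hJcard
    rw [← hcard] at hJ
    obtain ⟨σ, hσ⟩ := (grank_eq_card_iff _).mp hJ
    refine ⟨J, ⟨Equiv.Perm.ofSubtype σ, ?_⟩, hJcard⟩
    intro i hi
    rw [Equiv.Perm.ofSubtype_apply_of_mem σ hi]
    exact ⟨(σ ⟨i, hi⟩).2, hσ ⟨i, hi⟩⟩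
  · rintro ⟨S, ⟨σ, hσ⟩, hScard⟩
    refine ⟨S, hScard, ?_⟩
    have hcard : Fintype.card ↥S = k := by rw [Fintype.card_coe]; exact hScard
    rw [← hcard]
    apply (grank_eq_card_iff _).mpr
    set f : ↥S → ↥S := fun x => ⟨σ x, (hσ x x.2).1⟩ with hfdef
    have hinj : Function.Injective f := by
      intro a b hab
      have : σ (a : Fin n) = σ (b : Fin n) := congrArg Subtype.val hab
      exact Subtype.ext (σ.injective this)
    obtain ⟨hbij⟩ : Function.Bijective f := Finite.injective_iff_bijective.mp hinj
    refine ⟨Equiv.ofBijective f (Finite.injective_iff_bijective.mp hinj), fun j => ?_⟩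
    have : (Equiv.ofBijective f (Finite.injective_iff_bijective.mp hinj)) j = f j := rfl
    rw [this]
    exact (hσ j j.2).2
end
end

section
/- For a structured matrix Ā ∈ {0,*}^{n×n}, the generic rank of Ā equals v(Ā) (the maximum number of vertices covered by vertex-disjoint cycles in G(Ā)) if and only if there exists a maximum matching M of the bipartite graph B(Ā) such that the directed spanning subgraph (X, M) of G(Ā) is a vertex-disjoint union of directed cycles and isolated vertices. -/
noncomputable section
open Matrix

/-- A matching of the bipartite graph `B(P)`: a set of edges (i,j) with `P j i = *`
(from column vertex i to row vertex j) with pairwise distinct tails and pairwise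
distinct heads. -/
def IsMatching {α : Type*} (P : α → α → Bool) (M : Finset (α × α)) : Prop :=
  (∀ e ∈ M, P e.2 e.1 = true) ∧
  (∀ e ∈ M, ∀ f ∈ M, e.1 = f.1 → e = f) ∧
  (∀ e ∈ M, ∀ f ∈ M, e.2 = f.2 → e = f)

/-- A maximum matching of `B(P)`. -/
def IsMaxMatching {α : Type*} (P : α → α → Bool) (M : Finset (α × α)) : Prop :=
  IsMatching P M ∧ ∀ M' : Finset (α × α), IsMatching P M' → M'.card ≤ M.card

/-- Edge set of the directed cycle through the vertices of the list `c` (in order,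
wrapping around; a one-element list is a self-loop). -/
def cycleEdges {α : Type*} [DecidableEq α] (c : List α) : Finset (α × α) :=
  (c.zip (c.rotate 1)).toFinset

/-- Edge set of the directed path through the vertices of the list `p` (in order;
a one-element list is an isolated vertex, a path of length zero). -/
def pathEdges {α : Type*} [DecidableEq α] (p : List α) : Finset (α × α) :=
  (p.zip p.tail).toFinset

/-- The spanning subgraph `(X, M)` of the digraph is a vertex-disjoint union of
directed cycles and isolated vertices. -/
def UnionCyclesIsolated {α : Type*} [DecidableEq α] (M : Finset (α × α)) : Prop :=
  ∃ cycles : Finset (List α),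
    (∀ c ∈ cycles, c ≠ [] ∧ c.Nodup) ∧
    (∀ v : α, ∀ c ∈ cycles, ∀ c' ∈ cycles, v ∈ c → v ∈ c' → c = c') ∧
    M = cycles.biUnion cycleEdges

/-! ### Auxiliary lemmas -/

set_option linter.unusedSectionVars false

section Aux

/-- From a matrix of rank ≥ r one can extract r linearly independent columns. -/
lemma exists_indep_cols {N n r : ℕ} (A : Matrix (Fin N) (Fin n) ℝ) (h : A.rank = r) :
    ∃ g : Fin r → Fin n, Function.Injective g ∧ LinearIndependent ℝ (fun k => Aᵀ (g k)) := by
  obtain ⟨t, hts, hspan, hind⟩ := exists_linearIndependent ℝ (Set.range Aᵀ)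
  have hfin : t.Finite := hind.setFinite
  letI := hfin.fintype
  have hcard : r = Fintype.card t := by
    rw [← h, rank_eq_finrank_span_cols, show A.col = Aᵀ from rfl, ← hspan, finrank_span_set_eq_card hind,
      Set.toFinset_card]
  let e : Fin r → t := (Fintype.equivFin t).symm ∘ (finCongr hcard)
  have he : Function.Injective e :=
    (Equiv.injective _).comp (Equiv.injective _)
  have hchoose : ∀ k, ∃ j, Aᵀ j = ((e k : t) : Fin N → ℝ) := fun k => hts (e k).2
  choose g hg using hchoose
  refine ⟨g, ?_, ?_⟩
  · intro k l hkl
    apply he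
    apply Subtype.ext
    rw [← hg k, ← hg l, hkl]
  · have : (fun k => Aᵀ (g k)) = (fun x : t => (x : Fin N → ℝ)) ∘ e := funext fun k => hg k
    rw [this]
    exact hind.comp e he

/-- Every realization of `P` of rank `r` yields a matching of size `r`. -/
lemma rank_exists_matching {n : ℕ} (P : Fin n → Fin n → Bool)
    (θ : {ij : Fin n × Fin n // P ij.1 ij.2 = true} → ℝ) :
    ∃ M : Finset (Fin n × Fin n), IsMatching P M ∧ M.card = (toMat P θ).rank := by
  set A := toMat P θ with hA
  set r := A.rank with hr
  obtain ⟨g, hginj, hgind⟩ := exists_indep_cols A rfl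
  set B : Matrix (Fin n) (Fin r) ℝ := A.submatrix id g with hB
  have hBt : Bᵀ = fun k => Aᵀ (g k) := rfl
  have hBrank : Bᵀ.rank = r := by
    rw [hBt]
    have := (hgind.rank_matrix (M := fun k => Aᵀ (g k)))
    simpa using this
  obtain ⟨f, hfinj, hfind⟩ := exists_indep_cols Bᵀ (by rw [hBrank])
  set C : Matrix (Fin r) (Fin r) ℝ := B.submatrix f id with hC
  have hCrows : (fun k => C k) = fun k => Bᵀᵀ (f k) := rfl
  have hCunit : IsUnit C := by
    rw [← linearIndependent_rows_iff_isUnit]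
    rw [show C.row = (fun k => C k) from rfl, hCrows]
    exact hfind
  have hdet : C.det ≠ 0 := by
    have := (Matrix.isUnit_iff_isUnit_det C).mp hCunit
    exact this.ne_zero
  have hperm : ∃ τ : Equiv.Perm (Fin r), ∀ i, C (τ i) i ≠ 0 := by
    by_contra hcon
    push_neg at hcon
    apply hdet
    rw [Matrix.det_apply]
    apply Finset.sum_eq_zero
    intro τ _
    obtain ⟨i, hi⟩ := hcon τ
    have hz : ∏ j, C (τ j) j = 0 := Finset.prod_eq_zero (Finset.mem_univ i) hi
    rw [hz, smul_zero]
  obtain ⟨τ, hτ⟩ := hperm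
  have hAij : ∀ i, A (f (τ i)) (g i) ≠ 0 := fun i => hτ i
  have hP : ∀ i, P (f (τ i)) (g i) = true := by
    intro i
    by_contra hp
    apply hAij i
    simp only [hA, toMat, Matrix.of_apply, dif_neg hp]
  refine ⟨Finset.image (fun i => (g i, f (τ i))) Finset.univ, ⟨?_, ?_, ?_⟩, ?_⟩
  · intro e he
    simp only [Finset.mem_image, Finset.mem_univ, true_and] at he
    obtain ⟨i, rfl⟩ := he
    exact hP i
  · intro e he f' hf' hef
    simp only [Finset.mem_image, Finset.mem_univ, true_and] at he hf'
    obtain ⟨i, rfl⟩ := he; obtain ⟨j, rfl⟩ := hf'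
    simp only at hef
    obtain rfl := hginj hef
    rfl
  · intro e he f' hf' hef
    simp only [Finset.mem_image, Finset.mem_univ, true_and] at he hf'
    obtain ⟨i, rfl⟩ := he; obtain ⟨j, rfl⟩ := hf'
    simp only at hef
    obtain rfl := τ.injective (hfinj hef)
    rfl
  · rw [Finset.card_image_of_injective _ (fun i j hij => hginj (congrArg Prod.fst hij)),
      Finset.card_univ, Fintype.card_fin]

/-- Every matching of `P` yields a realization of rank at least its size. -/
lemma matching_exists_rank {n : ℕ} (P : Fin n → Fin n → Bool)
    {M : Finset (Fin n × Fin n)} (hM : IsMatching P M) :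
    ∃ θ : {ij : Fin n × Fin n // P ij.1 ij.2 = true} → ℝ,
      M.card ≤ (toMat P θ).rank := by
  classical
  obtain ⟨hP, htail, hhead⟩ := hM
  refine ⟨fun p => if (p.1.2, p.1.1) ∈ M then 1 else 0, ?_⟩
  set θ : {ij : Fin n × Fin n // P ij.1 ij.2 = true} → ℝ :=
    fun p => if (p.1.2, p.1.1) ∈ M then 1 else 0 with hθ
  set A := toMat P θ with hA
  have hAval : ∀ i j, A i j = if (j, i) ∈ M then 1 else 0 := by
    intro i j
    by_cases h : P i j = true
    · simp [hA, toMat, h, hθ]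
    · simp only [hA, toMat, Matrix.of_apply, dif_neg h]
      rw [if_neg]
      intro hmem
      exact h (hP _ hmem)
  set m := M.card with hm
  let e : Fin m → M := M.equivFin.symm
  have heinj : Function.Injective e := Equiv.injective _
  have hcol : ∀ k : Fin m, A.mulVecLin (Pi.single ((e k).1.1) 1) = Pi.single ((e k).1.2) (1:ℝ) := by
    intro k
    funext i
    simp only [mulVecLin_apply, mulVec, dotProduct]
    rw [Finset.sum_eq_single ((e k).1.1)]
    · rw [Pi.single_eq_same, mul_one, hAval, Pi.single_apply]
      congr 1
      rw [eq_iff_iff]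
      constructor
      · intro hmem
        have h2 : ((e k).1.1, i) = (e k).1 := htail _ hmem _ (e k).2 rfl
        exact (congrArg Prod.snd h2)
      · rintro rfl
        exact (e k).2
    · intro b _ hb
      rw [Pi.single_eq_of_ne hb, mul_zero]
    · intro hb
      exact absurd (Finset.mem_univ _) hb
  have hheadinj : Function.Injective (fun k : Fin m => (e k).1.2) := by
    intro k l hkl
    apply heinj
    exact Subtype.ext (hhead _ (e k).2 _ (e l).2 hkl)
  set v : Fin m → (Fin n → ℝ) := fun k => Pi.single ((e k).1.2) 1 with hv
  have hind : LinearIndependent ℝ v := by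
    have := (Pi.basisFun ℝ (Fin n)).linearIndependent
    have h2 := this.comp _ hheadinj
    convert h2 using 1
    funext k
    simp [Pi.basisFun_apply, hv]
  have hspan : Submodule.span ℝ (Set.range v) ≤ LinearMap.range A.mulVecLin := by
    rw [Submodule.span_le]
    rintro x ⟨k, rfl⟩
    exact ⟨Pi.single ((e k).1.1) 1, hcol k⟩
  calc M.card = Module.finrank ℝ (Submodule.span ℝ (Set.range v)) := by
          rw [finrank_span_eq_card hind, Fintype.card_fin]
    _ ≤ Module.finrank ℝ (LinearMap.range A.mulVecLin) := Submodule.finrank_mono hspan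
    _ = A.rank := rfl

/-! ### Orbit cycles of a permutation -/

/-- The orbit cycle of `i` under `σ`, as a list. -/
def orbitList {α : Type*} (σ : Equiv.Perm α) (i : α) : List α :=
  (List.range (Function.minimalPeriod σ i)).map (fun k => σ^[k] i)

section OrbitList
variable {α : Type*} [DecidableEq α] [Fintype α] (σ : Equiv.Perm α) (i : α)

lemma minimalPeriod_pos' : 0 < Function.minimalPeriod σ i := by
  have hper : Function.IsPeriodicPt σ (orderOf σ) i := by
    unfold Function.IsPeriodicPt Function.IsFixedPt
    rw [Equiv.Perm.iterate_eq_pow, pow_orderOf_eq_one]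
    rfl
  exact hper.minimalPeriod_pos (orderOf_pos σ)

lemma orbitList_ne_nil : orbitList σ i ≠ [] := by
  have := minimalPeriod_pos' σ i
  simp [orbitList, List.range_eq_nil]
  omega

lemma orbitList_nodup : (orbitList σ i).Nodup := by
  refine List.Nodup.map_on ?_ List.nodup_range
  intro x hx y hy hxy
  exact Function.iterate_injOn_Iio_minimalPeriod
    (List.mem_range.mp hx) (List.mem_range.mp hy) hxy

lemma mem_orbitList_iff {v : α} :
    v ∈ orbitList σ i ↔ ∃ k < Function.minimalPeriod σ i, σ^[k] i = v := by
  simp [orbitList, List.mem_map, List.mem_range]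
  constructor <;> rintro ⟨k, hk, h⟩ <;> exact ⟨k, hk, h.symm⟩

lemma self_mem_orbitList : i ∈ orbitList σ i := by
  rw [mem_orbitList_iff]
  exact ⟨0, minimalPeriod_pos' σ i, rfl⟩

lemma sigma_mem_orbitList {v : α} (hv : v ∈ orbitList σ i) : σ v ∈ orbitList σ i := by
  rw [mem_orbitList_iff] at hv ⊢
  obtain ⟨k, hk, rfl⟩ := hv
  refine ⟨(k+1) % Function.minimalPeriod σ i,
    Nat.mod_lt _ (minimalPeriod_pos' σ i), ?_⟩
  rw [Function.iterate_mod_minimalPeriod_eq, Function.iterate_succ_apply']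

lemma orbitList_closed {v : α} (hv : v ∉ orbitList σ i) (hsv : σ v ∈ orbitList σ i) :
    False := by
  rw [mem_orbitList_iff] at hsv
  obtain ⟨k, hk, hkv⟩ := hsv
  apply hv
  rw [mem_orbitList_iff]
  have hmpos := minimalPeriod_pos' σ i
  rcases Nat.eq_zero_or_pos k with rfl | hkpos
  · refine ⟨Function.minimalPeriod σ i - 1, by omega, ?_⟩
    apply σ.injective
    calc σ ((⇑σ)^[Function.minimalPeriod (⇑σ) i - 1] i)
        = (⇑σ)^[Function.minimalPeriod (⇑σ) i - 1 + 1] i :=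
          (Function.iterate_succ_apply' _ _ _).symm
      _ = (⇑σ)^[Function.minimalPeriod (⇑σ) i] i := by
          congr 1; omega
      _ = i := Function.iterate_minimalPeriod
      _ = σ v := hkv
  · refine ⟨k - 1, by omega, ?_⟩
    apply σ.injective
    calc σ ((⇑σ)^[k - 1] i) = (⇑σ)^[k - 1 + 1] i := (Function.iterate_succ_apply' _ _ _).symm
      _ = (⇑σ)^[k] i := by congr 1; omega
      _ = σ v := hkv

lemma cycleEdges_orbitList :
    cycleEdges (orbitList σ i) =
      (orbitList σ i).toFinset.image (fun x => (x, σ x)) := by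
  set m := Function.minimalPeriod σ i with hm
  have hmpos := minimalPeriod_pos' σ i
  set F : ℕ → α := fun k => σ^[k] i with hF
  have h1 : (orbitList σ i).zip ((orbitList σ i).rotate 1)
      = ((List.range m).zip ((List.range m).rotate 1)).map (Prod.map F F) := by
    rw [orbitList, ← hm, ← hF, ← List.map_rotate, List.zip_map]
  have h2 : (List.range m).zip ((List.range m).rotate 1)
      = (List.range m).map (fun k => (k, (k+1) % m)) := by
    apply List.ext_getElem
    · simp [List.length_zip]
    · intro k h h'
      simp only [List.length_zip, List.length_rotate, List.length_range, Nat.min_self] at h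
      rw [List.getElem_zip, List.getElem_rotate, List.getElem_map] <;>
        simp [List.getElem_range, h, Nat.mod_lt _ hmpos]
  have h3 : ∀ k ∈ List.range m, (Prod.map F F) (k, (k+1) % m) = (F k, σ (F k)) := by
    intro k _
    have h5 : (⇑σ)^[(k+1) % m] i = σ ((⇑σ)^[k] i) := by
      rw [hm, Function.iterate_mod_minimalPeriod_eq, Function.iterate_succ_apply']
    simp only [Prod.map_apply', hF]
    rw [Prod.mk.injEq]
    exact ⟨rfl, h5⟩
  rw [cycleEdges, h1, h2, List.map_map]
  have h4 : ((List.range m).map ((Prod.map F F) ∘ fun k => (k, (k+1) % m)))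
      = (List.range m).map (fun k => (F k, σ (F k))) := by
    apply List.map_congr_left
    intro k hk
    exact h3 k hk
  rw [h4, orbitList, ← hm, ← hF]
  ext p
  simp only [List.mem_toFinset, List.mem_map, Finset.mem_image, List.mem_range]
  constructor
  · rintro ⟨k, hk, rfl⟩
    exact ⟨F k, ⟨k, hk, rfl⟩, rfl⟩
  · rintro ⟨x, ⟨k, hk, rfl⟩, rfl⟩
    exact ⟨k, hk, rfl⟩

end OrbitList

/-- A permutation-invariant finite set decomposes into vertex-disjoint cycles whose
edges are exactly the graph of the permutation restricted to the set. -/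
lemma perm_invariant_decomp {α : Type*} [DecidableEq α] [Fintype α] (σ : Equiv.Perm α)
    (S : Finset α) : (∀ i ∈ S, σ i ∈ S) →
    ∃ cycles : Finset (List α),
      (∀ c ∈ cycles, c ≠ [] ∧ c.Nodup) ∧
      (∀ c ∈ cycles, ∀ v, v ∈ c → v ∈ S) ∧
      (∀ v : α, ∀ c ∈ cycles, ∀ c' ∈ cycles, v ∈ c → v ∈ c' → c = c') ∧
      cycles.biUnion cycleEdges = S.image (fun i => (i, σ i)) := by
  induction S using Finset.strongInduction with
  | _ S ih =>
    intro hS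
    rcases S.eq_empty_or_nonempty with rfl | ⟨i, hi⟩
    · exact ⟨∅, by simp, by simp, by simp, by simp⟩
    · set O := (orbitList σ i).toFinset with hO
      have hOS : O ⊆ S := by
        intro v hv
        rw [hO, List.mem_toFinset, mem_orbitList_iff] at hv
        obtain ⟨k, hk, rfl⟩ := hv
        clear hk
        induction k with
        | zero => exact hi
        | succ k ih2 => rw [Function.iterate_succ_apply']; exact hS _ ih2
      have hiO : i ∈ O := by rw [hO, List.mem_toFinset]; exact self_mem_orbitList σ i
      have hS' : ∀ v ∈ S \ O, σ v ∈ S \ O := by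
        intro v hv
        rw [Finset.mem_sdiff] at hv ⊢
        refine ⟨hS _ hv.1, ?_⟩
        intro hσv
        exact orbitList_closed σ i (by simpa [hO, List.mem_toFinset] using hv.2)
          (by rwa [hO, List.mem_toFinset] at hσv)
      have hssub : S \ O ⊂ S :=
        (Finset.ssubset_iff_of_subset Finset.sdiff_subset).mpr
          ⟨i, hi, by simp [hiO]⟩
      obtain ⟨cycles', h1', h2', h3', h4'⟩ := ih (S \ O) hssub hS'
      refine ⟨insert (orbitList σ i) cycles', ?_, ?_, ?_, ?_⟩
      · intro c hc
        rcases Finset.mem_insert.mp hc with rfl | hc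
        · exact ⟨orbitList_ne_nil σ i, orbitList_nodup σ i⟩
        · exact h1' c hc
      · intro c hc v hv
        rcases Finset.mem_insert.mp hc with rfl | hc
        · exact hOS (by rwa [hO, List.mem_toFinset])
        · exact (Finset.mem_sdiff.mp (h2' c hc v hv)).1
      · intro v c hc c' hc' hvc hvc'
        rcases Finset.mem_insert.mp hc with rfl | hc <;>
          rcases Finset.mem_insert.mp hc' with rfl | hc'
        · rfl
        · exact absurd (Finset.mem_sdiff.mp (h2' c' hc' v hvc')).2
            (not_not_intro (by simpa [hO, List.mem_toFinset] using hvc))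
        · exact absurd (Finset.mem_sdiff.mp (h2' c hc v hvc)).2
            (not_not_intro (by simpa [hO, List.mem_toFinset] using hvc'))
        · exact h3' v c hc c' hc' hvc hvc'
      · rw [Finset.biUnion_insert, h4', cycleEdges_orbitList, ← hO,
          ← Finset.image_union, Finset.union_sdiff_of_subset hOS]

/-- From a matching which is a union of cycles, produce a cycle cover of the same size. -/
lemma unionCycles_to_cover {α : Type*} [DecidableEq α] [Fintype α] {P : α → α → Bool}
    {M : Finset (α × α)} (hM : IsMatching P M) (hU : UnionCyclesIsolated M) :
    ∃ S : Finset α, CoveredByCycles P S ∧ S.card = M.card := by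
  classical
  obtain ⟨hP, htail, hhead⟩ := hM
  obtain ⟨cycles, hcyc, hdisj, hMeq⟩ := hU
  set S := M.image Prod.fst with hSdef
  have hmemS : ∀ v, v ∈ S ↔ ∃ j, (v, j) ∈ M := by
    intro v
    simp only [hSdef, Finset.mem_image]
    constructor
    · rintro ⟨⟨a, b⟩, hab, rfl⟩; exact ⟨b, hab⟩
    · rintro ⟨j, hj⟩; exact ⟨(v, j), hj, rfl⟩
  -- every element of a cycle is a tail of an edge of M
  have htailall : ∀ c ∈ cycles, ∀ a ∈ c, ∃ b, (a, b) ∈ M := by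
    intro c hc a ha
    obtain ⟨k, hk, rfl⟩ := List.mem_iff_getElem.mp ha
    have hklt : k < (c.zip (c.rotate 1)).length := by
      simp [List.length_zip, List.length_rotate, hk]
    refine ⟨(c.rotate 1)[k]'(by simpa [List.length_rotate] using hk), ?_⟩
    rw [hMeq]
    apply Finset.mem_biUnion.mpr
    refine ⟨c, hc, ?_⟩
    rw [cycleEdges, List.mem_toFinset]
    have := List.getElem_zip (l := c) (l' := c.rotate 1) (i := k) (h := hklt)
    rw [← this]
    exact List.getElem_mem _
  -- every head of an edge of M lies in a cycle, hence is a tail, hence in S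
  have hheadS : ∀ e ∈ M, e.2 ∈ S := by
    intro e he
    rw [hMeq, Finset.mem_biUnion] at he
    obtain ⟨c, hc, hec⟩ := he
    rw [cycleEdges, List.mem_toFinset] at hec
    have h2 : e.2 ∈ c.rotate 1 := by
      obtain ⟨a, b⟩ := e
      exact (List.of_mem_zip hec).2
    rw [List.mem_rotate] at h2
    obtain ⟨b, hb⟩ := htailall c hc e.2 h2
    exact (hmemS _).mpr ⟨b, hb⟩
  -- the successor function
  set next : α → α := fun v => if h : ∃ j, (v, j) ∈ M then h.choose else v with hnext
  have hnext_mem : ∀ v, (∃ j, (v, j) ∈ M) → (v, next v) ∈ M := by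
    intro v hv
    rw [hnext]
    simp only [dif_pos hv]
    exact hv.choose_spec
  have hnext_id : ∀ v, ¬(∃ j, (v, j) ∈ M) → next v = v := by
    intro v hv
    rw [hnext]
    simp only [dif_neg hv]
  have hinj : Function.Injective next := by
    intro a b hab
    by_cases ha : ∃ j, (a, j) ∈ M <;> by_cases hb : ∃ j, (b, j) ∈ M
    · have h1 := hnext_mem a ha
      have h2 := hnext_mem b hb
      rw [hab] at h1
      exact congrArg Prod.fst (hhead _ h1 _ h2 rfl)
    · exfalso
      have h1 := hnext_mem a ha
      have h2 : next a ∈ S := hheadS _ h1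
      rw [hab, hnext_id b hb] at h2
      exact hb ((hmemS b).mp h2)
    · exfalso
      have h1 := hnext_mem b hb
      have h2 : next b ∈ S := hheadS _ h1
      rw [← hab, hnext_id a ha] at h2
      exact ha ((hmemS a).mp h2)
    · rw [hnext_id a ha, hnext_id b hb] at hab
      exact hab
  let σ : Equiv.Perm α := Equiv.ofBijective next (Finite.injective_iff_bijective.mp hinj)
  refine ⟨S, ⟨σ, ?_⟩, ?_⟩
  · intro v hv
    have hv' := (hmemS v).mp hv
    have hmem := hnext_mem v hv'
    have hσ : σ v = next v := rfl
    refine ⟨?_, ?_⟩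
    · rw [hσ]
      exact hheadS _ hmem
    · rw [hσ]
      exact hP _ hmem
  · rw [hSdef]
    apply Finset.card_image_of_injOn
    intro e he f hf hef
    exact htail _ he _ hf hef

/-- A cycle cover yields a matching of the same size (with cycle structure). -/
lemma cover_matching {α : Type*} [DecidableEq α] {P : α → α → Bool} {S : Finset α}
    {σ : Equiv.Perm α} (hσ : ∀ i ∈ S, σ i ∈ S ∧ P (σ i) i = true) :
    IsMatching P (S.image (fun i => (i, σ i))) ∧
      (S.image (fun i => (i, σ i))).card = S.card := by
  constructor
  · refine ⟨?_, ?_, ?_⟩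
    · intro e he
      simp only [Finset.mem_image] at he
      obtain ⟨i, hi, rfl⟩ := he
      exact (hσ i hi).2
    · intro e he f hf hef
      simp only [Finset.mem_image] at he hf
      obtain ⟨i, hi, rfl⟩ := he; obtain ⟨j, hj, rfl⟩ := hf
      simp only at hef
      subst hef
      rfl
    · intro e he f hf hef
      simp only [Finset.mem_image] at he hf
      obtain ⟨i, hi, rfl⟩ := he; obtain ⟨j, hj, rfl⟩ := hf
      simp only at hef
      obtain rfl := σ.injective hef
      rfl
  · apply Finset.card_image_of_injOn
    intro i _ j _ hij
    exact congrArg Prod.fst hij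

end Aux

/-- grank(Ā) = v(Ā) iff there exists a maximum matching M of B(Ā)
such that the spanning subgraph (X, M) of G(Ā) is a vertex-disjoint union of
directed cycles and isolated vertices. -/
theorem grank_eq_cycleCoverNum_iff_max_matching_cycles
    (n : ℕ) (P : Fin n → Fin n → Bool) :
    grank P = cycleCoverNum P ↔
      ∃ M : Finset (Fin n × Fin n), IsMaxMatching P M ∧ UnionCyclesIsolated M := by
  classical
  -- basic facts about the two suprema
  have hgrank_ne : {r | ∃ θ, (toMat P θ).rank = r}.Nonempty :=
    ⟨(toMat P (fun _ => 0)).rank, ⟨fun _ => 0, rfl⟩⟩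
  have hgrank_bdd : BddAbove {r | ∃ θ, (toMat P θ).rank = r} := by
    refine ⟨n, ?_⟩
    rintro r ⟨θ, rfl⟩
    simpa using (toMat P θ).rank_le_card_width
  have hcc_ne : {k | ∃ S : Finset (Fin n), CoveredByCycles P S ∧ S.card = k}.Nonempty :=
    ⟨0, ∅, ⟨1, by simp⟩, rfl⟩
  have hcc_bdd : BddAbove {k | ∃ S : Finset (Fin n), CoveredByCycles P S ∧ S.card = k} := by
    refine ⟨n, ?_⟩
    rintro k ⟨S, _, rfl⟩
    simpa using Finset.card_le_univ S
  -- every matching size is at most grank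
  have hmatch_le : ∀ M : Finset (Fin n × Fin n), IsMatching P M → M.card ≤ grank P := by
    intro M hM
    obtain ⟨θ, hθ⟩ := matching_exists_rank P hM
    exact hθ.trans (le_csSup hgrank_bdd ⟨θ, rfl⟩)
  -- cycleCoverNum ≤ grank always
  have hcc_le_grank : cycleCoverNum P ≤ grank P := by
    apply csSup_le hcc_ne
    rintro k ⟨S, ⟨σ, hσ⟩, rfl⟩
    obtain ⟨hm, hcard⟩ := cover_matching hσ
    have := hmatch_le _ hm
    rwa [hcard] at this
  constructor
  · -- forward direction
    intro h
    obtain ⟨S, hcov, hScard0⟩ :=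
      Nat.sSup_mem hcc_ne hcc_bdd
    have hScard : S.card = cycleCoverNum P := hScard0
    obtain ⟨σ, hσ⟩ := hcov
    obtain ⟨hm, hcard⟩ := cover_matching hσ
    refine ⟨S.image (fun i => (i, σ i)), ⟨hm, ?_⟩, ?_⟩
    · intro M' hM'
      have h1 := hmatch_le M' hM'
      rw [h, ← hScard, ← hcard] at h1
      exact h1
    · obtain ⟨cycles, hc1, hc2, hc3, hc4⟩ :=
        perm_invariant_decomp σ S (fun i hi => (hσ i hi).1)
      exact ⟨cycles, hc1, hc3, hc4.symm⟩
  · -- backward direction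
    rintro ⟨M, ⟨hM, hmax⟩, hU⟩
    obtain ⟨S, hcov, hScard⟩ := unionCycles_to_cover hM hU
    have hM_le_cc : M.card ≤ cycleCoverNum P := by
      have h1 : S.card ≤ sSup {k | ∃ S : Finset (Fin n), CoveredByCycles P S ∧ S.card = k} :=
        le_csSup hcc_bdd ⟨S, hcov, rfl⟩
      rw [hScard] at h1
      exact h1
    have hgrank_le : grank P ≤ M.card := by
      obtain ⟨θ0, hθ0'⟩ := Nat.sSup_mem hgrank_ne hgrank_bdd
      have hθ0 : (toMat P θ0).rank = grank P := hθ0'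
      obtain ⟨M'', hM'', hM''card⟩ := rank_exists_matching P θ0
      have := hmax M'' hM''
      rw [hM''card, hθ0] at this
      exact this
    exact le_antisymm (hgrank_le.trans hM_le_cc) hcc_le_grank
end
end

section
/- For any structured matrix Ā ∈ {0,*}^{n×n}, either almost all real realizations of Ā are diagonalizable, or almost all real realizations of Ā are non-diagonalizable; i.e., there is a proper algebraic variety V in the parameter space such that either all realizations outside V are diagonalizable, or all realizations outside V are non-diagonalizable. -/
noncomputable section
open Matrix

/-- A real square matrix is diagonalizable (over ℂ): similar to a diagonal matrix. -/
def IsDiagonalizable {α : Type*} [Fintype α] [DecidableEq α] (M : Matrix α α ℝ) : Prop :=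
  ∃ S : Matrix α α ℂ, IsUnit S ∧ (S * M.map (fun x => (x : ℂ)) * S⁻¹).IsDiag

/-- A property `Q` holds for almost all realizations of the pattern `P`, i.e. for all
realizations outside a proper algebraic variety of the parameter space. -/
def GenericallyHolds {α β : Type*} (P : α → β → Bool)
    (Q : Matrix α β ℝ → Prop) : Prop :=
  ∃ p : MvPolynomial {ij : α × β // P ij.1 ij.2 = true} ℝ, p ≠ 0 ∧
    ∀ θ, MvPolynomial.eval θ p ≠ 0 → Q (toMat P θ)

/-- A structured matrix is generically diagonalizable if almost all of its
realizations are diagonalizable. -/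
def GenericallyDiagonalizable {α : Type*} [Fintype α] [DecidableEq α]
    (P : α → α → Bool) : Prop :=
  GenericallyHolds P IsDiagonalizable

section AuxUFD
open UniqueFactorizationMonoid
variable {M : Type*} [CommMonoidWithZero M] [NormalizationMonoid M]
  [UniqueFactorizationMonoid M]

lemma aux_squarefree_radical (a : M) : Squarefree (radical a) := by
  classical
  by_cases ha : a = 0
  · subst ha; rw [radical_zero]; exact isUnit_one.squarefree
  · have hnt : Nontrivial M := ⟨⟨a, 0, ha⟩⟩
    have hrad : radical a = ((primeFactors a).val).prod := by
      rw [radical, Finset.prod_eq_multiset_prod, Multiset.map_id]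
    have hmem : ∀ p ∈ (primeFactors a).val, Irreducible p := by
      intro p hp
      exact irreducible_of_normalized_factor p (Multiset.mem_toFinset.mp hp)
    rw [squarefree_iff_nodup_normalizedFactors (radical_ne_zero (a := a)), hrad,
      normalizedFactors_prod_eq _ hmem]
    have heq : Multiset.map normalize (primeFactors a).val = (primeFactors a).val :=
      (Multiset.map_congr rfl fun p hp =>
        normalize_normalized_factor p (Multiset.mem_toFinset.mp hp)).trans
        (Multiset.map_id _)
    rw [heq]
    exact (primeFactors a).nodup

lemma aux_dvd_radical_pow (a : M) (ha : a ≠ 0) :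
    a ∣ radical a ^ (Multiset.card (normalizedFactors a) + 1) := by
  classical
  have h1 : a ∣ (normalizedFactors a).prod := (prod_normalizedFactors ha).symm.dvd
  refine h1.trans ?_
  have hrad : radical a = ((normalizedFactors a).dedup).prod := by
    rw [radical, Finset.prod_eq_multiset_prod, Multiset.map_id, primeFactors]
    rfl
  have hle : normalizedFactors a ≤
      (Multiset.card (normalizedFactors a) + 1) • (normalizedFactors a).dedup := by
    rw [Multiset.le_iff_count]
    intro p
    rw [Multiset.count_nsmul, Multiset.count_dedup]
    by_cases hp : p ∈ normalizedFactors a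
    · simp only [hp, if_true, mul_one]
      exact (Multiset.count_le_card p _).trans (Nat.le_succ _)
    · simp [hp, Multiset.count_eq_zero.mpr hp]
  calc (normalizedFactors a).prod
      ∣ ((Multiset.card (normalizedFactors a) + 1) • (normalizedFactors a).dedup).prod :=
        Multiset.prod_dvd_prod_of_le hle
    _ = radical a ^ (Multiset.card (normalizedFactors a) + 1) := by
        rw [Multiset.prod_nsmul, hrad]
end AuxUFD

section AuxLin
open Polynomial
lemma aux_map_aeval_matrix {R S : Type*} [CommRing R] [CommRing S] (f : R →+* S)
    {m : Type*} [Fintype m] [DecidableEq m] (A : Matrix m m R) (p : Polynomial R) :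
    (Polynomial.aeval A p).map f = Polynomial.aeval (A.map f) (p.map f) := by
  have key : (f.mapMatrix.comp (algebraMap R (Matrix m m R)))
      = (algebraMap S (Matrix m m S)).comp f := by
    ext r i j
    simp [Matrix.algebraMap_matrix_apply, apply_ite f]
  have h1 : (Polynomial.aeval A p).map f = f.mapMatrix (Polynomial.aeval A p) := rfl
  have h2 : A.map f = f.mapMatrix A := rfl
  rw [h1, Polynomial.aeval_def, Polynomial.hom_eval₂, key, Polynomial.aeval_def,
    Polynomial.eval₂_map, h2]

lemma aux_aeval_conj {m : Type*} [Fintype m] [DecidableEq m] (S X : Matrix m m ℂ)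
    (hS : IsUnit S) (q : Polynomial ℂ) :
    Polynomial.aeval (S * X * S⁻¹) q = S * Polynomial.aeval X q * S⁻¹ := by
  have hdet : IsUnit S.det := (Matrix.isUnit_iff_isUnit_det S).mp hS
  have h1 : S * S⁻¹ = 1 := Matrix.mul_nonsing_inv S hdet
  have h2 : S⁻¹ * S = 1 := Matrix.nonsing_inv_mul S hdet
  let ψ : Matrix m m ℂ →ₐ[ℂ] Matrix m m ℂ :=
    { toFun := fun Y => S * Y * S⁻¹
      map_one' := by show S * 1 * S⁻¹ = 1; rw [mul_one, h1]
      map_mul' := fun a b => by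
        show S * (a * b) * S⁻¹ = (S * a * S⁻¹) * (S * b * S⁻¹)
        calc S * (a * b) * S⁻¹ = (S * a) * (b * S⁻¹) := by noncomm_ring
        _ = (S * a) * 1 * (b * S⁻¹) := by rw [mul_one]
        _ = (S * a) * (S⁻¹ * S) * (b * S⁻¹) := by rw [h2]
        _ = (S * a * S⁻¹) * (S * b * S⁻¹) := by noncomm_ring
      map_zero' := by show S * 0 * S⁻¹ = 0; rw [mul_zero, zero_mul]
      map_add' := fun a b => by
        show S * (a + b) * S⁻¹ = S * a * S⁻¹ + S * b * S⁻¹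
        noncomm_ring
      commutes' := fun r => by
        show S * (algebraMap ℂ (Matrix m m ℂ) r) * S⁻¹ = algebraMap ℂ (Matrix m m ℂ) r
        rw [Algebra.algebraMap_eq_smul_one, Matrix.mul_smul, Matrix.smul_mul, mul_one, h1] }
  exact Polynomial.aeval_algHom_apply ψ X q

lemma aux_isDiagonalizable {n : ℕ} (M : Matrix (Fin n) (Fin n) ℝ) (q : Polynomial ℂ)
    (hq : Squarefree q)
    (h0 : Polynomial.aeval (M.map (fun x => (x : ℂ))) q = 0) :
    IsDiagonalizable M := by
  classical
  set Mc : Matrix (Fin n) (Fin n) ℂ := M.map (fun x => (x : ℂ)) with hMc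
  set f : Module.End ℂ (Fin n → ℂ) := Matrix.toLinAlgEquiv' Mc with hf
  have haev : Polynomial.aeval f q = 0 := by
    rw [hf, Polynomial.aeval_algHom_apply (Matrix.toLinAlgEquiv' :
      Matrix (Fin n) (Fin n) ℂ ≃ₐ[ℂ] _) Mc q, h0, _root_.map_zero]
  have hss : f.IsSemisimple := Module.End.isSemisimple_of_squarefree_aeval_eq_zero hq haev
  have htop : ⨆ μ : ℂ, f.eigenspace μ = ⊤ := by
    have h := Module.End.iSup_maxGenEigenspace_eq_top f
    simpa only [hss.isFinitelySemisimple.maxGenEigenspace_eq_eigenspace] using h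
  have hspan : Submodule.span ℂ (⋃ μ : ℂ, (f.eigenspace μ : Set (Fin n → ℂ))) = ⊤ :=
    (Submodule.iSup_eq_span _).symm.trans htop
  obtain ⟨bset, hbE, hsp2, hli⟩ :=
    exists_linearIndependent ℂ (⋃ μ : ℂ, (f.eigenspace μ : Set (Fin n → ℂ)))
  let B : Module.Basis bset ℂ (Fin n → ℂ) :=
    Module.Basis.mk hli (by rw [Subtype.range_coe, hsp2, hspan])
  letI : Fintype bset := FiniteDimensional.fintypeBasisIndex B
  let e : Module.Basis (Fin n) ℂ (Fin n → ℂ) := Pi.basisFun ℂ (Fin n)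
  let σ : bset ≃ Fin n := B.indexEquiv e
  let B' : Module.Basis (Fin n) ℂ (Fin n → ℂ) := B.reindex σ
  have hBmem : ∀ i : Fin n, ∃ μ : ℂ, f (B' i) = μ • B' i := by
    intro i
    have : (B' i : Fin n → ℂ) ∈ ⋃ μ : ℂ, (f.eigenspace μ : Set (Fin n → ℂ)) := by
      have : B' i = ((σ.symm i : bset) : Fin n → ℂ) := by
        rw [Module.Basis.reindex_apply, Module.Basis.mk_apply]
      rw [this]
      exact hbE (σ.symm i).2
    obtain ⟨s, ⟨μ, hs⟩, hmem⟩ := this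
    exact ⟨μ, Module.End.mem_eigenspace_iff.mp (by rw [← hs] at hmem; exact hmem)⟩
  choose μ hμ using hBmem
  have hD : (LinearMap.toMatrix B' B' f).IsDiag := by
    intro i j hij
    rw [LinearMap.toMatrix_apply, hμ j, _root_.map_smul, Module.Basis.repr_self]
    simp [Finsupp.single_apply, Finsupp.smul_apply, Ne.symm hij]
  refine ⟨B'.toMatrix e, ?_, ?_⟩
  · letI := B'.invertibleToMatrix e
    exact isUnit_of_invertible _
  · have hinv : (B'.toMatrix e)⁻¹ = e.toMatrix B' :=
      Matrix.inv_eq_right_inv (B'.toMatrix_mul_toMatrix_flip e)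
    rw [hinv, ← hMc]
    have hMe : Mc = LinearMap.toMatrix e e f := by
      rw [hf]
      show Mc = LinearMap.toMatrix (Pi.basisFun ℂ (Fin n)) (Pi.basisFun ℂ (Fin n)) _
      rw [LinearMap.toMatrix_eq_toMatrix']
      show Mc = LinearMap.toMatrix' (Matrix.toLin' Mc)
      rw [LinearMap.toMatrix'_toLin']
    rw [hMe, basis_toMatrix_mul_linearMap_toMatrix_mul_basis_toMatrix]
    exact hD

lemma aux_minpoly_squarefree {n : ℕ} (M : Matrix (Fin n) (Fin n) ℝ)
    (hd : IsDiagonalizable M) :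
    Squarefree (minpoly ℂ (M.map (fun x => (x : ℂ)))) := by
  classical
  obtain ⟨S, hS, hdiag⟩ := hd
  set Mc : Matrix (Fin n) (Fin n) ℂ := M.map (fun x => (x : ℂ)) with hMcdef
  set D : Matrix (Fin n) (Fin n) ℂ := S * Mc * S⁻¹ with hD
  set t : Finset ℂ := Finset.image (fun i => D i i) Finset.univ with ht
  set q : Polynomial ℂ := ∏ x ∈ t, (X - C x) with hq
  have hsep : q.Separable :=
    Polynomial.separable_prod_X_sub_C_iff'.mpr (fun x _ y _ h => h)
  have hdet : IsUnit S.det := (Matrix.isUnit_iff_isUnit_det S).mp hS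
  have h1 : S * S⁻¹ = 1 := Matrix.mul_nonsing_inv S hdet
  have h2 : S⁻¹ * S = 1 := Matrix.nonsing_inv_mul S hdet
  have haevD : Polynomial.aeval D q = 0 := by
    have hDd : Matrix.diagonal (fun i => D i i) = D := hdiag.diagonal_diag
    have hpi : Polynomial.aeval (fun i => D i i : Fin n → ℂ) q = 0 := by
      funext i
      have h3 : Polynomial.aeval (D i i) q
          = (Polynomial.aeval (fun i => D i i : Fin n → ℂ) q) i :=
        Polynomial.aeval_algHom_apply (Pi.evalAlgHom ℂ (fun _ => ℂ) i)
          (fun i => D i i) q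
      rw [Pi.zero_apply, ← h3]
      simp only [Polynomial.coe_aeval_eq_eval]
      rw [hq, Polynomial.eval_prod]
      refine Finset.prod_eq_zero (Finset.mem_image_of_mem _ (Finset.mem_univ i)) ?_
      simp
    have h4 : Matrix.diagonal (fun i => D i i)
        = Matrix.diagonalAlgHom (R := ℂ) (n := Fin n) (α := ℂ) (fun i => D i i) := rfl
    rw [← hDd, h4, Polynomial.aeval_algHom_apply, hpi, _root_.map_zero]
  have hMc : S⁻¹ * D * S = Mc := by
    rw [hD]
    calc S⁻¹ * (S * Mc * S⁻¹) * S = (S⁻¹ * S) * Mc * (S⁻¹ * S) := by noncomm_ring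
    _ = Mc := by rw [h2, one_mul, mul_one]
  have hSinv : IsUnit S⁻¹ := Matrix.isUnit_nonsing_inv_iff.mpr hS
  have haevMc : Polynomial.aeval Mc q = 0 := by
    have hconj := aux_aeval_conj S⁻¹ D hSinv q
    rw [Matrix.nonsing_inv_nonsing_inv S hdet] at hconj
    rw [← hMc, hconj, haevD, mul_zero, zero_mul]
  exact Squarefree.squarefree_of_dvd (minpoly.dvd ℂ Mc haevMc) hsep.squarefree
end AuxLin


lemma aux_exists_denom {R K : Type*} [CommRing R] [IsDomain R] [Field K] [Algebra R K]
    [IsFractionRing R K] (p : Polynomial K) :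
    ∃ (Q : Polynomial R) (s : R), s ≠ 0 ∧
      Q.map (algebraMap R K) = Polynomial.C (algebraMap R K s) * p := by
  obtain ⟨b, hb⟩ := IsLocalization.integerNormalization_map_to_map (nonZeroDivisors R) p
  refine ⟨IsLocalization.integerNormalization (nonZeroDivisors R) p, b, nonZeroDivisors.ne_zero b.2, ?_⟩
  rw [hb, ← algebraMap_smul K (b : R) p, Polynomial.smul_eq_C_mul]

/-- for any structured square matrix, either almost all realizations
are diagonalizable, or almost all realizations are non-diagonalizable. -/
theorem generically_diagonalizable_or_not
    (n : ℕ) (P : Fin n → Fin n → Bool) :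
    GenericallyHolds P IsDiagonalizable ∨
      GenericallyHolds P (fun A => ¬ IsDiagonalizable A) := by
  classical
  let R := MvPolynomial {ij : Fin n × Fin n // P ij.1 ij.2 = true} ℝ
  haveI : CharZero R := charZero_of_injective_ringHom
    (MvPolynomial.C_injective {ij : Fin n × Fin n // P ij.1 ij.2 = true} ℝ)
  let K := FractionRing R
  let φ : R →+* K := algebraMap R K
  have hφ : Function.Injective φ := IsFractionRing.injective R K
  have hφne : ∀ s : R, s ≠ 0 → φ s ≠ 0 := fun s hs h0 => hs (hφ (h0.trans (_root_.map_zero φ).symm))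
  -- the generic structured matrix
  let A : Matrix (Fin n) (Fin n) R :=
    Matrix.of fun i j => if h : P i j = true then MvPolynomial.X ⟨(i, j), h⟩ else 0
  have hAspec : ∀ θ, A.map (MvPolynomial.eval θ) = toMat P θ := by
    intro θ; ext i j
    by_cases h : P i j = true <;> simp [A, toMat, Matrix.map_apply, h]
  let c : Polynomial R := A.charpoly
  let AK : Matrix (Fin n) (Fin n) K := A.map φ
  have hcK : AK.charpoly = c.map φ := Matrix.charpoly_map A φ
  set g : Polynomial K := UniqueFactorizationMonoid.radical AK.charpoly with hgdef
  have hcne : AK.charpoly ≠ 0 := (Matrix.charpoly_monic AK).ne_zero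
  set N : ℕ :=
    Multiset.card (UniqueFactorizationMonoid.normalizedFactors AK.charpoly) + 1 with hN
  obtain ⟨h, hgh⟩ : AK.charpoly ∣ g ^ N := aux_dvd_radical_pow _ hcne
  have hsq : Squarefree g := aux_squarefree_radical _
  have hsep : g.Separable := (PerfectField.separable_iff_squarefree).mpr hsq
  obtain ⟨a, b, hab⟩ := hsep
  obtain ⟨G, s₁, hs₁, hG⟩ := aux_exists_denom (R := R) g
  obtain ⟨Hh, s₂, hs₂, hH⟩ := aux_exists_denom (R := R) h
  obtain ⟨A₁, s₃, hs₃, hA₁⟩ := aux_exists_denom (R := R) a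
  obtain ⟨B₁, s₄, hs₄, hB₁⟩ := aux_exists_denom (R := R) b
  have E1 : G ^ N * Polynomial.C s₂ = c * Hh * Polynomial.C (s₁ ^ N) := by
    apply Polynomial.map_injective φ hφ
    rw [Polynomial.map_mul, Polynomial.map_mul, Polynomial.map_mul, Polynomial.map_pow,
      Polynomial.map_C, Polynomial.map_C, hG, hH, ← hcK, _root_.map_pow φ s₁, mul_pow, hgh,
      Polynomial.C_pow]
    ring
  have E2 : A₁ * G * Polynomial.C s₄ + B₁ * Polynomial.derivative G * Polynomial.C s₃
      = Polynomial.C (s₁ * (s₃ * s₄)) := by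
    apply Polynomial.map_injective φ hφ
    rw [Polynomial.map_add, Polynomial.map_mul, Polynomial.map_mul, Polynomial.map_mul,
      Polynomial.map_mul, Polynomial.map_C, Polynomial.map_C, Polynomial.map_C,
      ← Polynomial.derivative_map, hA₁, hB₁, hG, Polynomial.derivative_C_mul, _root_.map_mul φ s₁ (s₃ * s₄),
      _root_.map_mul φ s₃ s₄, Polynomial.C_mul, Polynomial.C_mul]
    linear_combination (Polynomial.C (φ s₁) * (Polynomial.C (φ s₃) * Polynomial.C (φ s₄))) * hab
  by_cases hcase : Polynomial.aeval AK g = 0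
  · -- generically diagonalizable
    have hAG : Polynomial.aeval A G = 0 := by
      have h1 : (Polynomial.aeval A G).map φ = 0 := by
        rw [aux_map_aeval_matrix φ A G, hG, _root_.map_mul, hcase, mul_zero]
      refine Matrix.ext fun i j => hφ ?_
      have h2 : φ ((Polynomial.aeval A G) i j) = 0 :=
        congrFun (congrFun (congrArg (fun X => X) h1) i) j
      rw [h2, Matrix.zero_apply, _root_.map_zero]
    refine Or.inl ⟨s₁ * (s₃ * s₄), mul_ne_zero hs₁ (mul_ne_zero hs₃ hs₄), ?_⟩
    intro θ hθ
    have hev : MvPolynomial.eval θ (s₁ * (s₃ * s₄))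
        = MvPolynomial.eval θ s₁ * (MvPolynomial.eval θ s₃ * MvPolynomial.eval θ s₄) := by
      rw [_root_.map_mul, _root_.map_mul]
    set ρ : R →+* ℂ := (algebraMap ℝ ℂ).comp (MvPolynomial.eval θ) with hρ
    have hρp : ρ (s₁ * (s₃ * s₄)) ≠ 0 := by
      simp only [hρ, RingHom.coe_comp, Function.comp_apply, Complex.coe_algebraMap]
      exact_mod_cast hθ
    have hMc : (toMat P θ).map (fun x => (x : ℂ)) = A.map ρ := by
      rw [← hAspec θ, Matrix.map_map, hρ, RingHom.coe_comp]
      rfl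
    apply aux_isDiagonalizable (toMat P θ) (G.map ρ)
    · apply Polynomial.Separable.squarefree
      have E2ρ : (A₁.map ρ) * (G.map ρ) * Polynomial.C (ρ s₄)
          + (B₁.map ρ) * Polynomial.derivative (G.map ρ) * Polynomial.C (ρ s₃)
          = Polynomial.C (ρ (s₁ * (s₃ * s₄))) := by
        have := congrArg (Polynomial.map ρ) E2
        rwa [Polynomial.map_add, Polynomial.map_mul, Polynomial.map_mul, Polynomial.map_mul,
          Polynomial.map_mul, Polynomial.map_C, Polynomial.map_C, Polynomial.map_C,
          ← Polynomial.derivative_map] at this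
      refine ⟨Polynomial.C (ρ (s₁ * (s₃ * s₄)))⁻¹ * ((A₁.map ρ) * Polynomial.C (ρ s₄)),
        Polynomial.C (ρ (s₁ * (s₃ * s₄)))⁻¹ * ((B₁.map ρ) * Polynomial.C (ρ s₃)), ?_⟩
      calc Polynomial.C (ρ (s₁ * (s₃ * s₄)))⁻¹ * ((A₁.map ρ) * Polynomial.C (ρ s₄)) * (G.map ρ)
            + Polynomial.C (ρ (s₁ * (s₃ * s₄)))⁻¹ * ((B₁.map ρ) * Polynomial.C (ρ s₃))
              * Polynomial.derivative (G.map ρ)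
          = Polynomial.C (ρ (s₁ * (s₃ * s₄)))⁻¹ * ((A₁.map ρ) * (G.map ρ) * Polynomial.C (ρ s₄)
            + (B₁.map ρ) * Polynomial.derivative (G.map ρ) * Polynomial.C (ρ s₃)) := by ring
        _ = 1 := by
            rw [E2ρ, ← Polynomial.C_mul, inv_mul_cancel₀ hρp, Polynomial.C_1]
    · rw [hMc, ← aux_map_aeval_matrix ρ A G, hAG, Matrix.map_zero _ (_root_.map_zero ρ)]
  · -- generically non-diagonalizable
    have hent : ∃ i j, (Polynomial.aeval AK g) i j ≠ 0 := by
      by_contra hno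
      push_neg at hno
      exact hcase (by ext i j; simpa using hno i j)
    obtain ⟨i, j, hx⟩ := hent
    set u : R := (Polynomial.aeval A G) i j with hu'
    have hu2 : φ u = φ s₁ * (Polynomial.aeval AK g) i j := by
      have h1 : (Polynomial.aeval A G).map φ = Polynomial.aeval AK (G.map φ) :=
        aux_map_aeval_matrix φ A G
      rw [hG, ← Polynomial.smul_eq_C_mul, _root_.map_smul] at h1
      calc φ u = ((Polynomial.aeval A G).map φ) i j := rfl
        _ = (φ s₁ • Polynomial.aeval AK g) i j := by rw [h1]
        _ = φ s₁ * (Polynomial.aeval AK g) i j := by rw [Matrix.smul_apply, smul_eq_mul]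
    have hu : u ≠ 0 := by
      intro h0
      rw [h0, _root_.map_zero] at hu2
      exact hx (by
        rcases mul_eq_zero.mp hu2.symm with h | h
        · exact absurd h (hφne s₁ hs₁)
        · exact h)
    refine Or.inr ⟨s₁ * (s₂ * u), mul_ne_zero hs₁ (mul_ne_zero hs₂ hu), ?_⟩
    intro θ hθ hdiag
    set ρ : R →+* ℂ := (algebraMap ℝ ℂ).comp (MvPolynomial.eval θ) with hρ
    have hevals : ∀ s : R, MvPolynomial.eval θ s ≠ 0 → ρ s ≠ 0 := by
      intro s hs
      simp only [hρ, RingHom.coe_comp, Function.comp_apply, Complex.coe_algebraMap]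
      exact_mod_cast hs
    have hθ1 : MvPolynomial.eval θ s₁ ≠ 0 := by
      intro h0; apply hθ; rw [_root_.map_mul, h0, zero_mul]
    have hθ2 : MvPolynomial.eval θ s₂ ≠ 0 := by
      intro h0; apply hθ; rw [_root_.map_mul, _root_.map_mul, h0, zero_mul, mul_zero]
    have hθu : MvPolynomial.eval θ u ≠ 0 := by
      intro h0; apply hθ; rw [_root_.map_mul, _root_.map_mul, h0, mul_zero, mul_zero]
    set Mc : Matrix (Fin n) (Fin n) ℂ := (toMat P θ).map (fun x => (x : ℂ)) with hMcdef
    have key : Squarefree (minpoly ℂ Mc) := aux_minpoly_squarefree _ hdiag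
    have hMc : Mc = A.map ρ := by
      rw [hMcdef, ← hAspec θ, Matrix.map_map, hρ, RingHom.coe_comp]
      rfl
    have hchar : Mc.charpoly = c.map ρ := by rw [hMc]; exact Matrix.charpoly_map A ρ
    have hm1 : minpoly ℂ Mc ∣ c.map ρ :=
      hchar ▸ minpoly.dvd ℂ Mc (Matrix.aeval_self_charpoly Mc)
    have E1ρ : (G.map ρ) ^ N * Polynomial.C (ρ s₂)
        = (c.map ρ) * (Hh.map ρ) * Polynomial.C (ρ (s₁ ^ N)) := by
      have := congrArg (Polynomial.map ρ) E1
      rwa [Polynomial.map_mul, Polynomial.map_mul, Polynomial.map_mul, Polynomial.map_pow,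
        Polynomial.map_C, Polynomial.map_C] at this
    have hm2 : minpoly ℂ Mc ∣ (G.map ρ) ^ N := by
      have hd1 : minpoly ℂ Mc ∣ (G.map ρ) ^ N * Polynomial.C (ρ s₂) := by
        rw [E1ρ]
        exact hm1.trans (dvd_mul_of_dvd_left (dvd_mul_right _ _) _)
      exact (IsUnit.dvd_mul_right (Polynomial.isUnit_C.mpr
        (Ne.isUnit (hevals s₂ hθ2)))).mp hd1
    have hm3 : minpoly ℂ Mc ∣ G.map ρ :=
      (key.dvd_pow_iff_dvd (Nat.succ_ne_zero _)).mp hm2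
    obtain ⟨w, hw⟩ := hm3
    have hz : Polynomial.aeval Mc (G.map ρ) = 0 := by
      rw [hw, _root_.map_mul, minpoly.aeval, zero_mul]
    have hcontra : ρ u = 0 := by
      have h2 : (Polynomial.aeval A G).map ρ = 0 := by
        rw [aux_map_aeval_matrix ρ A G, ← hMc, hz]
      calc ρ u = ((Polynomial.aeval A G).map ρ) i j := rfl
        _ = 0 := by rw [h2]; rfl
    apply hθu
    have : ρ u = ((MvPolynomial.eval θ u : ℝ) : ℂ) := rfl
    rw [this] at hcontra
    exact_mod_cast hcontra
end
end

section
/- If every vertex of the digraph G(Ā) of a structured matrix Ā ∈ {0,*}^{n×n} has a self-loop (equivalently, all diagonal entries of Ā are free parameters), then Ā is generically diagonalizable. -/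
noncomputable section
open Matrix

namespace StructAux

open Module

/-- Hankel matrix of traces of powers. -/
def hank {R : Type*} [CommRing R] (n : ℕ) (M : Matrix (Fin n) (Fin n) R) :
    Matrix (Fin n) (Fin n) R :=
  Matrix.of fun i j => (M ^ ((i : ℕ) + (j : ℕ))).trace

lemma hank_map {R S : Type*} [CommRing R] [CommRing S] (φ : R →+* S) (n : ℕ)
    (M : Matrix (Fin n) (Fin n) R) :
    hank n (φ.mapMatrix M) = φ.mapMatrix (hank n M) := by
  ext i j
  show ((φ.mapMatrix M) ^ ((i : ℕ) + j)).trace = φ ((M ^ ((i : ℕ) + j)).trace)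
  rw [← map_pow φ.mapMatrix M, AddMonoidHom.map_trace φ]
  rfl

lemma trace_pow_of_nilpotent_sub {W : Type*} [AddCommGroup W] [Module ℂ W]
    [FiniteDimensional ℂ W] (g : Module.End ℂ W) (μ : ℂ)
    (h : IsNilpotent (g - algebraMap ℂ (Module.End ℂ W) μ)) (k : ℕ) :
    LinearMap.trace ℂ W (g ^ k) = μ ^ k * (finrank ℂ W : ℂ) := by
  set N := g - algebraMap ℂ (Module.End ℂ W) μ with hNdef
  have hg : g = algebraMap ℂ (Module.End ℂ W) μ + N := by rw [hNdef]; abel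
  have hcomm : Commute (algebraMap ℂ (Module.End ℂ W) μ) N := (Algebra.commutes μ N)
  rw [hg, hcomm.add_pow, map_sum]
  rw [Finset.sum_eq_single k]
  · rw [Nat.sub_self, pow_zero, mul_one, Nat.choose_self, Nat.cast_one, mul_one,
      ← map_pow, Module.algebraMap_end_eq_smul_id, LinearMap.map_smul]
    have : LinearMap.trace ℂ W LinearMap.id = (finrank ℂ W : ℂ) := LinearMap.trace_id ℂ W
    rw [this, smul_eq_mul]
  · intro j hj hjk
    have hpos : 0 < k - j :=
      Nat.sub_pos_of_lt (lt_of_le_of_ne (Nat.lt_succ_iff.mp (Finset.mem_range.mp hj)) hjk)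
    have h1 : IsNilpotent (N ^ (k - j)) := h.pow_of_pos hpos.ne'
    have c1 : Commute ((algebraMap ℂ (Module.End ℂ W) μ) ^ j) (N ^ (k - j)) :=
      hcomm.pow_pow j (k - j)
    have hmul1 : IsNilpotent ((algebraMap ℂ (Module.End ℂ W) μ) ^ j * N ^ (k - j)) :=
      c1.isNilpotent_mul_left h1
    have c2 : Commute ((algebraMap ℂ (Module.End ℂ W) μ) ^ j * N ^ (k - j))
        ((k.choose j : Module.End ℂ W)) := (Nat.cast_commute (k.choose j) _).symm
    have h2 : IsNilpotent ((algebraMap ℂ (Module.End ℂ W) μ) ^ j * N ^ (k - j) *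
        (k.choose j : Module.End ℂ W)) := c2.isNilpotent_mul_right hmul1
    have h3 : IsNilpotent (LinearMap.trace ℂ W ((algebraMap ℂ (Module.End ℂ W) μ) ^ j *
        N ^ (k - j) * (k.choose j : Module.End ℂ W))) :=
      LinearMap.isNilpotent_trace_of_isNilpotent h2
    exact h3.eq_zero
  · intro h; exact absurd (Finset.self_mem_range_succ k) h

lemma exists_conj_isDiag_of_hank_det_ne_zero {n : ℕ} (A : Matrix (Fin n) (Fin n) ℂ)
    (hdet : (hank n A).det ≠ 0) :
    ∃ S : Matrix (Fin n) (Fin n) ℂ, IsUnit S ∧ (S * A * S⁻¹).IsDiag := by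
  set f : Module.End ℂ (Fin n → ℂ) := Matrix.toLinAlgEquiv' A with hf
  have h_fin : {μ : ℂ | f.maxGenEigenspace μ ≠ ⊥}.Finite :=
    WellFoundedGT.finite_ne_bot_of_iSupIndep f.independent_maxGenEigenspace
  set s : Finset ℂ := h_fin.toFinset with hs
  have hds : DirectSum.IsInternal (fun μ : ℂ => f.maxGenEigenspace μ) :=
    DirectSum.isInternal_submodule_of_iSupIndep_of_iSup_eq_top
      f.independent_maxGenEigenspace f.iSup_maxGenEigenspace_eq_top
  -- trace of powers formula
  have key : ∀ k : ℕ, (A ^ k).trace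
      = ∑ μ ∈ s, (μ ^ k * (finrank ℂ (f.maxGenEigenspace μ) : ℂ)) := by
    intro k
    have hmaps : ∀ μ : ℂ, Set.MapsTo (f ^ k) (f.maxGenEigenspace μ) (f.maxGenEigenspace μ) :=
      fun μ => f.mapsTo_maxGenEigenspace_of_comm (Commute.pow_right rfl k) μ
    have h1 : (A ^ k).trace = LinearMap.trace ℂ _ (f ^ k) := by
      rw [LinearMap.trace_eq_matrix_trace ℂ (Pi.basisFun ℂ (Fin n)),
        LinearMap.toMatrix_eq_toMatrix', hf, ← map_pow Matrix.toLinAlgEquiv' A k]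
      rw [show (LinearMap.toMatrix'
          (Matrix.toLinAlgEquiv' (A ^ k) : (Fin n → ℂ) →ₗ[ℂ] (Fin n → ℂ))) = A ^ k from
        LinearMap.toMatrix'_toLin' (A ^ k)]
    rw [h1, LinearMap.trace_eq_sum_trace_restrict' hds h_fin hmaps]
    refine Finset.sum_congr rfl fun μ hμ => ?_
    have hres : ((f ^ k).restrict (hmaps μ))
        = (f.restrict (f.mapsTo_maxGenEigenspace_of_comm rfl μ)) ^ k :=
      (Module.End.pow_restrict k _).symm
    rw [hres]
    exact trace_pow_of_nilpotent_sub _ μ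
      (f.isNilpotent_restrict_maxGenEigenspace_sub_algebraMap μ) k
  set d : ℂ → ℕ := fun μ => finrank ℂ (f.maxGenEigenspace μ) with hd
  have hsum : ∑ μ ∈ s, d μ = n := by
    have h0 := key 0
    simp only [pow_zero, one_mul, pow_zero] at h0
    have h1 : ((1 : Matrix (Fin n) (Fin n) ℂ)).trace = (n : ℂ) := by
      rw [Matrix.trace_one]; simp
    rw [h1] at h0
    have h2 : ((∑ μ ∈ s, d μ : ℕ) : ℂ) = (n : ℂ) := by push_cast; rw [← h0]
    exact_mod_cast h2
  have hfact : hank n A = (Matrix.of fun (i : Fin n) (μ : s) => (μ : ℂ) ^ (i : ℕ)) *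
      (Matrix.of fun (μ : s) (j : Fin n) => (μ : ℂ) ^ (j : ℕ) * (d (μ : ℂ) : ℂ)) := by
    ext i j
    rw [Matrix.mul_apply]
    show (A ^ ((i : ℕ) + (j : ℕ))).trace = _
    rw [key, ← Finset.sum_coe_sort s]
    refine Finset.sum_congr rfl fun μ _ => ?_
    show (μ : ℂ) ^ ((i : ℕ) + (j : ℕ)) * (d (μ : ℂ) : ℂ) = _
    simp only [Matrix.of_apply]
    rw [pow_add]; ring
  have hrank : (hank n A).rank ≤ s.card := by
    rw [hfact]
    calc ((Matrix.of fun (i : Fin n) (μ : s) => (μ : ℂ) ^ (i : ℕ)) *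
        (Matrix.of fun (μ : s) (j : Fin n) => (μ : ℂ) ^ (j : ℕ) * (d (μ : ℂ) : ℂ))).rank
        ≤ (Matrix.of fun (i : Fin n) (μ : s) => (μ : ℂ) ^ (i : ℕ)).rank :=
          Matrix.rank_mul_le_left _ _
      _ ≤ Fintype.card s := Matrix.rank_le_card_width _
      _ = s.card := Fintype.card_coe s
  have hunit : IsUnit (hank n A) :=
    (Matrix.isUnit_iff_isUnit_det _).mpr (isUnit_iff_ne_zero.mpr hdet)
  have hrankn : (hank n A).rank = n := by
    rw [Matrix.rank_of_isUnit _ hunit, Fintype.card_fin]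
  have hn_le : n ≤ s.card := hrankn ▸ hrank
  have hone_le : ∀ μ ∈ s, 1 ≤ d μ := by
    intro μ hμ
    rw [Nat.one_le_iff_ne_zero]
    intro h0
    exact (h_fin.mem_toFinset.mp hμ) (Submodule.finrank_eq_zero.mp h0)
  have hcard_le : s.card ≤ n := by
    calc s.card = ∑ _μ ∈ s, 1 := by simp
      _ ≤ ∑ μ ∈ s, d μ := Finset.sum_le_sum hone_le
      _ = n := hsum
  have hcard : s.card = n := le_antisymm hcard_le hn_le
  -- eigenvectors
  have heig : ∀ μ : ℂ, μ ∈ s → f.HasEigenvalue μ := by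
    intro μ hμ
    have hne : f.maxGenEigenspace μ ≠ ⊥ := h_fin.mem_toFinset.mp hμ
    exact (Module.End.hasUnifEigenvalue_iff_hasUnifEigenvalue_one
      (by norm_num : (0 : ℕ∞) < ⊤)).mp hne
  choose v hv using fun μ : s => (heig μ μ.2).exists_hasEigenvector
  have hli : LinearIndependent ℂ v :=
    f.eigenvectors_linearIndependent' (fun μ : s => (μ : ℂ)) Subtype.coe_injective v hv
  have hcard' : Fintype.card (Fin n) = Fintype.card s := by
    rw [Fintype.card_fin, Fintype.card_coe, hcard]
  let e : Fin n ≃ s := Fintype.equivOfCardEq hcard'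
  set S' : Matrix (Fin n) (Fin n) ℂ := Matrix.of fun i j => v (e j) i with hS'def
  have hS' : IsUnit S' := by
    rw [← Matrix.linearIndependent_cols_iff_isUnit]
    have hcols : (fun j => S'ᵀ j) = fun j => v (e j) := by
      funext j; funext i; rfl
    rw [show S'.col = (fun j => S'ᵀ j) from rfl, hcols]
    exact hli.comp e e.injective
  have hdetS' : IsUnit S'.det := (Matrix.isUnit_iff_isUnit_det _).mp hS'
  have hAS : A * S' = S' * Matrix.diagonal (fun j => ((e j : ℂ))) := by
    ext i j
    have h2 : A.mulVec (v (e j)) = ((e j : ℂ)) • v (e j) := by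
      have := (hv (e j)).apply_eq_smul
      rwa [hf, Matrix.toLinAlgEquiv'_apply] at this
    have hL : (A * S') i j = A.mulVec (v (e j)) i := by
      simp [Matrix.mul_apply, Matrix.mulVec, dotProduct, hS'def]
    rw [hL, h2, Matrix.mul_diagonal]
    simp [hS'def, mul_comm]
  refine ⟨S'⁻¹, Matrix.isUnit_nonsing_inv_iff.mpr hS', ?_⟩
  rw [Matrix.nonsing_inv_nonsing_inv _ hdetS', Matrix.mul_assoc, hAS, ← Matrix.mul_assoc,
    Matrix.nonsing_inv_mul _ hdetS', Matrix.one_mul]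
  exact Matrix.isDiag_diagonal _

/-- Generic matrix of a pattern, over the polynomial ring. -/
def genMat (n : ℕ) (P : Fin n → Fin n → Bool) :
    Matrix (Fin n) (Fin n) (MvPolynomial {ij : (Fin n) × (Fin n) // P ij.1 ij.2 = true} ℝ) :=
  Matrix.of fun i j => if h : P i j = true then MvPolynomial.X ⟨(i, j), h⟩ else 0

lemma mapMatrix_genMat (n : ℕ) (P : Fin n → Fin n → Bool)
    (θ : {ij : (Fin n) × (Fin n) // P ij.1 ij.2 = true} → ℝ) :
    (MvPolynomial.eval θ).mapMatrix (genMat n P) = toMat P θ := by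
  ext i j
  simp [genMat, toMat, apply_dite (MvPolynomial.eval θ)]

lemma eval_det_hank (n : ℕ) (P : Fin n → Fin n → Bool)
    (θ : {ij : (Fin n) × (Fin n) // P ij.1 ij.2 = true} → ℝ) :
    MvPolynomial.eval θ ((hank n (genMat n P)).det) = (hank n (toMat P θ)).det := by
  rw [RingHom.map_det, ← hank_map, mapMatrix_genMat]

lemma hank_diagonal {n : ℕ} (dv : Fin n → ℝ) :
    hank n (Matrix.diagonal dv) = (Matrix.vandermonde dv)ᵀ * (Matrix.vandermonde dv) := by
  ext i j
  rw [Matrix.mul_apply]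
  show (Matrix.diagonal dv ^ ((i : ℕ) + (j : ℕ))).trace = _
  rw [Matrix.diagonal_pow, Matrix.trace_diagonal]
  refine Finset.sum_congr rfl fun l _ => ?_
  simp [Matrix.vandermonde, pow_add]

end StructAux

/-- if every vertex of G(Ā) has a self-loop (all diagonal entries of
Ā are free parameters), then Ā is generically diagonalizable. -/
theorem selfLoops_implies_genericallyDiagonalizable
    (n : ℕ) (P : Fin n → Fin n → Bool) (hloop : ∀ i : Fin n, P i i = true) :
    GenericallyDiagonalizable P := by
  classical
  refine ⟨(StructAux.hank n (StructAux.genMat n P)).det, ?_, ?_⟩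
  · -- the polynomial is nonzero: evaluate at a diagonal realization with distinct entries
    intro hp0
    set θ0 : {ij : (Fin n) × (Fin n) // P ij.1 ij.2 = true} → ℝ :=
      fun v => if v.1.1 = v.1.2 then ((v.1.1 : ℕ) : ℝ) + 1 else 0 with hθ0
    have htoMat : toMat P θ0 = Matrix.diagonal (fun i : Fin n => ((i : ℕ) : ℝ) + 1) := by
      ext i j
      rcases eq_or_ne i j with rfl | hij
      · rw [Matrix.diagonal_apply_eq]
        show (if h : P i i = true then θ0 ⟨(i, i), h⟩ else 0) = _
        rw [dif_pos (hloop i), hθ0]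
        simp
      · rw [Matrix.diagonal_apply_ne _ hij]
        show (if h : P i j = true then θ0 ⟨(i, j), h⟩ else 0) = 0
        split_ifs with h
        · rw [hθ0]; simp [hij]
        · rfl
    have heval : MvPolynomial.eval θ0 ((StructAux.hank n (StructAux.genMat n P)).det)
        = (StructAux.hank n (toMat P θ0)).det := StructAux.eval_det_hank n P θ0
    rw [hp0, map_zero] at heval
    rw [htoMat, StructAux.hank_diagonal, Matrix.det_mul, Matrix.det_transpose] at heval
    have hinj : Function.Injective (fun i : Fin n => ((i : ℕ) : ℝ) + 1) := by
      intro a b hab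
      simp only [add_left_inj, Nat.cast_inj] at hab
      exact Fin.val_injective hab
    have hvdm : (Matrix.vandermonde (fun i : Fin n => ((i : ℕ) : ℝ) + 1)).det ≠ 0 :=
      Matrix.det_vandermonde_ne_zero_iff.mpr hinj
    exact hvdm (by
      have := heval.symm
      rcases mul_eq_zero.mp this with h | h
      · exact h
      · exact h)
  · intro θ hθ
    have heval : MvPolynomial.eval θ ((StructAux.hank n (StructAux.genMat n P)).det)
        = (StructAux.hank n (toMat P θ)).det := StructAux.eval_det_hank n P θ
    have hR : (StructAux.hank n (toMat P θ)).det ≠ 0 := heval ▸ hθ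
    have hmapeq : (toMat P θ).map (fun x => (x : ℂ))
        = (Complex.ofRealHom).mapMatrix (toMat P θ) := rfl
    have hC : (StructAux.hank n ((toMat P θ).map (fun x => (x : ℂ)))).det ≠ 0 := by
      rw [hmapeq, StructAux.hank_map, ← RingHom.map_det]
      simpa using hR
    obtain ⟨S, hS, hdiag⟩ :=
      StructAux.exists_conj_isDiag_of_hank_det_ne_zero ((toMat P θ).map (fun x => (x : ℂ))) hC
    exact ⟨S, hS, hdiag⟩
end
end

section
/- If Ā ∈ {0,*}^{n×n} is a nonzero structured matrix whose digraph G(Ā) is acyclic (contains no directed cycles, including self-loops), then Ā is generically non-diagonalizable, i.e., almost all realizations of Ā are non-diagonalizable. -/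
noncomputable section
open Matrix

lemma exists_cycle_of_closed_walk {n : ℕ} (P : Fin n → Fin n → Bool)
    (hwalk : ∃ m, 0 < m ∧ ∃ g : ℕ → Fin n, g m = g 0 ∧ ∀ k < m, P (g (k+1)) (g k) = true) :
    ∃ S : Finset (Fin n), S.Nonempty ∧ CoveredByCycles P S := by
  classical
  obtain ⟨m, ⟨hm, g, hgm, hedge⟩, hminp⟩ :
      ∃ m, (0 < m ∧ ∃ g : ℕ → Fin n, g m = g 0 ∧ ∀ k < m, P (g (k+1)) (g k) = true) ∧
        ∀ k, k < m → ¬(0 < k ∧ ∃ g : ℕ → Fin n, g k = g 0 ∧ ∀ t < k, P (g (t+1)) (g t) = true) :=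
    ⟨Nat.find hwalk, Nat.find_spec hwalk, fun k hk => Nat.find_min hwalk hk⟩
  have hinj : ∀ s t, s < m → t < m → g s = g t → s = t := by
    intro s t hs ht heq
    by_contra hne
    wlog h : s < t generalizing s t
    · exact this t s ht hs heq.symm (Ne.symm hne) (by omega)
    refine hminp (t - s) (by omega) ⟨by omega, fun k => g (s + k), ?_, ?_⟩
    · show g (s + (t - s)) = g (s + 0)
      have h2 : s + (t - s) = t := by omega
      rw [h2]; exact heq.symm
    · intro k hk
      show P (g (s + (k + 1))) (g (s + k)) = true
      have h1 : s + (k + 1) = s + k + 1 := by omega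
      rw [h1]
      exact hedge (s + k) (by omega)
  set l : List (Fin n) := (List.range m).map g with hl
  have hlen : l.length = m := by simp [hl]
  have hget : ∀ i (h : i < l.length), l[i] = g i := by
    intro i h; simp [hl]
  have hnodup : l.Nodup := by
    refine List.Nodup.map_on ?_ List.nodup_range
    intro x hx y hy hxy
    exact hinj x y (List.mem_range.mp hx) (List.mem_range.mp hy) hxy
  refine ⟨l.toFinset, ⟨g 0, ?_⟩, l.formPerm, ?_⟩
  · simp only [List.mem_toFinset, hl, List.mem_map]
    exact ⟨0, List.mem_range.mpr hm, rfl⟩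
  · intro x hx
    simp only [List.mem_toFinset, hl, List.mem_map] at hx
    obtain ⟨k, hk, rfl⟩ := hx
    have hk' : k < m := List.mem_range.mp hk
    have hkl : k < l.length := by omega
    have hform : l.formPerm (g k) = g ((k+1) % m) := by
      have := List.formPerm_apply_getElem l hnodup k hkl
      rw [hget k hkl] at this
      rw [this, hget]; rw [hlen]
    constructor
    · rw [hform]
      simp only [List.mem_toFinset, hl, List.mem_map]
      exact ⟨(k+1) % m, List.mem_range.mpr (Nat.mod_lt _ hm), rfl⟩
    · rw [hform]
      rcases Nat.lt_or_ge (k+1) m with h1 | h1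
      · rw [Nat.mod_eq_of_lt h1]; exact hedge k hk'
      · have hkm : k + 1 = m := by omega
        have h2 : (k+1) % m = 0 := by rw [hkm]; exact Nat.mod_self m
        rw [h2, ← hgm, ← hkm]
        exact hedge k hk'

lemma walk_of_pow_ne_zero {n : ℕ} (P : Fin n → Fin n → Bool) (M : Matrix (Fin n) (Fin n) ℂ)
    (hM : ∀ i j, P i j = false → M i j = 0) :
    ∀ k (i j : Fin n), (M ^ k) i j ≠ 0 →
      ∃ g : ℕ → Fin n, g 0 = j ∧ g k = i ∧ ∀ t < k, P (g (t+1)) (g t) = true := by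
  intro k
  induction k with
  | zero =>
    intro i j h
    rw [pow_zero] at h
    have : i = j := by
      by_contra hne
      simp [Matrix.one_apply_ne hne] at h
    exact ⟨fun _ => j, rfl, by rw [this], by intro t ht; omega⟩
  | succ k ih =>
    intro i j h
    rw [pow_succ', Matrix.mul_apply] at h
    obtain ⟨l, hl⟩ : ∃ l, M i l * (M ^ k) l j ≠ 0 := by
      by_contra hc
      push_neg at hc
      exact h (Finset.sum_eq_zero fun l _ => hc l)
    have hMil : M i l ≠ 0 := fun hz => hl (by rw [hz, zero_mul])
    have hpk : (M ^ k) l j ≠ 0 := fun hz => hl (by rw [hz, mul_zero])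
    obtain ⟨g, hg0, hgk, hge⟩ := ih l j hpk
    have hPil : P i l = true := by
      by_contra hc
      exact hMil (hM i l (by simpa using hc))
    refine ⟨fun t => if t = k + 1 then i else g t, by simp [hg0], by simp, ?_⟩
    intro t ht
    rcases Nat.lt_or_ge t k with h1 | h1
    · simp only [if_neg (by omega : ¬ t + 1 = k + 1), if_neg (by omega : ¬ t = k + 1)]
      exact hge t h1
    · have h2 : t = k := by omega
      subst h2
      simp only [if_pos rfl, if_neg (by omega : ¬ t = t + 1)]
      rw [hgk]; exact hPil

/-- if Ā is a nonzero structured matrix whose digraph G(Ā) is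
acyclic (no directed cycles, including self-loops), then Ā is generically
non-diagonalizable: almost all realizations of Ā are non-diagonalizable. -/
theorem acyclic_implies_generically_nondiagonalizable
    (n : ℕ) (P : Fin n → Fin n → Bool)
    (hnz : ∃ i j : Fin n, P i j = true)
    (hacyclic : ¬ ∃ S : Finset (Fin n), S.Nonempty ∧ CoveredByCycles P S) :
    GenericallyHolds P (fun A => ¬ IsDiagonalizable A) := by
  classical
  obtain ⟨i0, j0, h0⟩ := hnz
  have hn : 0 < n := i0.pos
  refine ⟨MvPolynomial.X ⟨(i0, j0), h0⟩, MvPolynomial.X_ne_zero _, ?_⟩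
  intro θ hθ
  rw [MvPolynomial.eval_X] at hθ
  rintro ⟨S, hS, hdiag⟩
  set M : Matrix (Fin n) (Fin n) ℂ := (toMat P θ).map (fun x => (x : ℂ)) with hMdef
  have hMpat : ∀ i j, P i j = false → M i j = 0 := by
    intro i j hij
    simp [hMdef, toMat, Matrix.map_apply, hij]
  have hpow : M ^ n = 0 := by
    ext i j
    rw [Matrix.zero_apply]
    by_contra h
    obtain ⟨g, hg0, hgn, hge⟩ := walk_of_pow_ne_zero P M hMpat n i j h
    obtain ⟨a, b, hab, heq⟩ := Fintype.exists_ne_map_eq_of_card_lt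
      (fun t : Fin (n+1) => g t) (by simp)
    wlog hlt : (a : ℕ) < (b : ℕ) generalizing a b
    · have h1 : (b : ℕ) ≠ (a : ℕ) := fun hc => hab (Fin.ext hc.symm)
      exact this b a (Ne.symm hab) heq.symm (by omega)
    refine hacyclic (exists_cycle_of_closed_walk P
      ⟨(b : ℕ) - (a : ℕ), by omega, fun t => g ((a : ℕ) + t), ?_, ?_⟩)
    · show g ((a : ℕ) + ((b : ℕ) - (a : ℕ))) = g ((a : ℕ) + 0)
      have h1 : (a : ℕ) + ((b : ℕ) - (a : ℕ)) = (b : ℕ) := by omega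
      rw [h1]; exact heq.symm
    · intro t ht
      show P (g ((a : ℕ) + (t + 1))) (g ((a : ℕ) + t)) = true
      have h1 : (a : ℕ) + (t + 1) = (a : ℕ) + t + 1 := by omega
      rw [h1]
      have hb : (b : ℕ) < n + 1 := b.isLt
      exact hge ((a : ℕ) + t) (by omega)
  have hdet : IsUnit S.det := (Matrix.isUnit_iff_isUnit_det S).mp hS
  have hSl : S⁻¹ * S = 1 := Matrix.nonsing_inv_mul S hdet
  have hSr : S * S⁻¹ = 1 := Matrix.mul_nonsing_inv S hdet
  set D := S * M * S⁻¹ with hDdef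
  have hconj : ∀ k, D ^ k = S * M ^ k * S⁻¹ := by
    intro k
    induction k with
    | zero => simp [hSr]
    | succ k ihk =>
      rw [pow_succ, pow_succ, ihk, hDdef]
      rw [show S * M ^ k * S⁻¹ * (S * M * S⁻¹) = S * M ^ k * (S⁻¹ * S) * (M * S⁻¹) by
        simp only [mul_assoc], hSl, mul_one]
      simp only [mul_assoc]
  have hDn : D ^ n = 0 := by rw [hconj n, hpow]; simp
  have hDdiag : Matrix.diagonal D.diag = D := hdiag.diagonal_diag
  have hD0 : D = 0 := by
    rw [← hDdiag]
    have h1 : Matrix.diagonal (D.diag) ^ n = 0 := by rw [hDdiag]; exact hDn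
    rw [Matrix.diagonal_pow] at h1
    have hz : ∀ i, D.diag i = 0 := by
      intro i
      have h2 := congrFun (congrFun h1 i) i
      simp only [Matrix.diagonal_apply_eq, Matrix.zero_apply, Pi.pow_apply] at h2
      exact pow_eq_zero_iff (by omega : n ≠ 0) |>.mp h2
    rw [funext hz, Matrix.diagonal_zero]
  have hM0 : M = 0 := by
    have h3 : S⁻¹ * D * S = M := by
      rw [hDdef]
      rw [show S⁻¹ * (S * M * S⁻¹) * S = (S⁻¹ * S) * M * (S⁻¹ * S) by simp only [mul_assoc], hSl]
      simp
    rw [hD0] at h3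
    simpa using h3.symm
  have h4 : M i0 j0 = 0 := by rw [hM0]; rfl
  rw [hMdef] at h4
  simp [toMat, Matrix.map_apply, h0] at h4
  exact hθ h4
end
end

section
/- In an undirected finite graph (viewed as a digraph where every edge (u,v) implies (v,u), self-loops allowed), for every maximum matching M of the associated bipartite graph B(Ā), the directed spanning subgraph (X,M) is a union of disjoint cycles and paths in which every path has even length. -/
noncomputable section
open Matrix

/-! ### Auxiliary definitions and lemmas -/

/-- Pair up consecutive elements of a list in both directions:
`[a,b,c,d,...] ↦ [(a,b),(b,a),(c,d),(d,c),...]`. -/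
def pairE {α : Type*} : List α → List (α × α)
  | a :: b :: l => (a, b) :: (b, a) :: pairE l
  | _ => []

lemma pairE_fst {α : Type*} : ∀ (l : List α), Even l.length →
    (pairE l).map Prod.fst = l
  | [], _ => rfl
  | [a], h => by simp [Nat.even_iff] at h
  | a :: b :: l, h => by
    have h' : Even l.length := by
      simp only [List.length_cons, Nat.even_iff] at h ⊢; omega
    simp [pairE, pairE_fst l h']

lemma pairE_snd_perm {α : Type*} : ∀ (l : List α), Even l.length →
    List.Perm ((pairE l).map Prod.snd) l
  | [], _ => List.Perm.refl _
  | [a], h => by simp [Nat.even_iff] at h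
  | a :: b :: l, h => by
    have h' : Even l.length := by
      simp only [List.length_cons, Nat.even_iff] at h ⊢; omega
    simp only [pairE, List.map_cons]
    exact ((pairE_snd_perm l h').cons a |>.cons b).trans (List.Perm.swap a b l)

lemma pairE_length {α : Type*} : ∀ (l : List α), Even l.length →
    (pairE l).length = l.length := by
  intro l h
  have := pairE_fst l h
  calc (pairE l).length = ((pairE l).map Prod.fst).length := by simp
    _ = l.length := by rw [this]

lemma pairE_mem_mem {α : Type*} : ∀ {l : List α} {x y : α},
    (x, y) ∈ pairE l → x ∈ l ∧ y ∈ l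
  | [], x, y, hm => by simp [pairE] at hm
  | [a], x, y, hm => by simp [pairE] at hm
  | a :: b :: l, x, y, hm => by
    simp only [pairE, List.mem_cons, Prod.mk.injEq] at hm
    rcases hm with ⟨rfl, rfl⟩ | ⟨rfl, rfl⟩ | hm
    · simp
    · simp
    · have := pairE_mem_mem hm
      simp [this.1, this.2]

lemma pairE_rel {α : Type*} {R : α → α → Prop} (hsymm : ∀ a b, R a b → R b a) :
    ∀ {l : List α} {x y : α}, (x, y) ∈ pairE l → List.Chain' R l → R x y
  | [], x, y, hm, _ => by simp [pairE] at hm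
  | [a], x, y, hm, _ => by simp [pairE] at hm
  | a :: b :: l, x, y, hm, hc => by
    rw [List.Chain', List.isChain_cons_cons] at hc
    obtain ⟨hab, hc'⟩ := hc
    simp only [pairE, List.mem_cons, Prod.mk.injEq] at hm
    rcases hm with ⟨rfl, rfl⟩ | ⟨rfl, rfl⟩ | hm
    · exact hab
    · exact hsymm _ _ hab
    · exact pairE_rel hsymm hm hc'.tail

lemma chain'_of_zip {α : Type*} {R : α → α → Prop} :
    ∀ (l : List α), (∀ e ∈ l.zip l.tail, R e.1 e.2) → List.Chain' R l
  | [], _ => List.IsChain.nil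
  | [a], _ => List.isChain_singleton a
  | a :: b :: l, h => by
    rw [List.Chain', List.isChain_cons_cons]
    refine ⟨h (a, b) (by simp), chain'_of_zip (b :: l) ?_⟩
    intro e he
    exact h e (by simp only [List.zip, List.tail_cons, List.zipWith_cons_cons,
      List.mem_cons]; right; exact he)

/-- in an undirected graph (structurally symmetric pattern), for every
maximum matching M of the bipartite graph B(Ā), in any decomposition of the
spanning subgraph (X, M) into vertex-disjoint directed cycles and directed paths,
every path has even length. -/
theorem symmetric_max_matching_paths_even
    (n : ℕ) (P : Fin n → Fin n → Bool)
    (hsym : ∀ i j : Fin n, P i j = true → P j i = true)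
    (M : Finset (Fin n × Fin n)) (hM : IsMaxMatching P M)
    (cycles paths : Finset (List (Fin n)))
    (hc : ∀ c ∈ cycles, c ≠ [] ∧ c.Nodup)
    (hp : ∀ p ∈ paths, p ≠ [] ∧ p.Nodup)
    (hdisj : Disjoint cycles paths)
    (hpart : ∀ v : Fin n, ∃! l : List (Fin n), l ∈ cycles ∪ paths ∧ v ∈ l)
    (hedges : M = cycles.biUnion cycleEdges ∪ paths.biUnion pathEdges) :
    ∀ p ∈ paths, Even (p.length - 1) := by
  intro p hpmem
  by_contra hodd
  obtain ⟨hpne, hpnd⟩ := hp p hpmem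
  have hlen1 : 1 ≤ p.length := List.length_pos_iff.mpr hpne
  have hEven : Even p.length := by
    rw [Nat.even_iff] at hodd ⊢; omega
  -- path edges are in M
  have hsubM : pathEdges p ⊆ M := by
    rw [hedges]
    exact (Finset.subset_biUnion_of_mem pathEdges hpmem).trans Finset.subset_union_right
  -- any edge of M touching p is a path edge of p
  have htouch : ∀ e ∈ M, (e.1 ∈ p ∨ e.2 ∈ p) → e ∈ pathEdges p := by
    intro e he hv
    rw [hedges] at he
    rcases Finset.mem_union.1 he with he | he
    · exfalso
      obtain ⟨c, hcmem, hec⟩ := Finset.mem_biUnion.1 he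
      have hec' : e ∈ c.zip (c.rotate 1) := List.mem_toFinset.1 hec
      have h1 : e.1 ∈ c := (List.of_mem_zip hec').1
      have h2 : e.2 ∈ c := List.mem_rotate.1 (List.of_mem_zip hec').2
      have hcp : c = p := by
        rcases hv with hv | hv
        · exact ((hpart e.1).unique ⟨Finset.mem_union_left _ hcmem, h1⟩
            ⟨Finset.mem_union_right _ hpmem, hv⟩)
        · exact ((hpart e.2).unique ⟨Finset.mem_union_left _ hcmem, h2⟩
            ⟨Finset.mem_union_right _ hpmem, hv⟩)
      exact (Finset.disjoint_left.1 hdisj hcmem) (hcp ▸ hpmem)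
    · obtain ⟨q, hqmem, heq⟩ := Finset.mem_biUnion.1 he
      have heq' : e ∈ q.zip q.tail := List.mem_toFinset.1 heq
      have h1 : e.1 ∈ q := (List.of_mem_zip heq').1
      have h2 : e.2 ∈ q := List.mem_of_mem_tail (List.of_mem_zip heq').2
      have hqp : q = p := by
        rcases hv with hv | hv
        · exact ((hpart e.1).unique ⟨Finset.mem_union_right _ hqmem, h1⟩
            ⟨Finset.mem_union_right _ hpmem, hv⟩)
        · exact ((hpart e.2).unique ⟨Finset.mem_union_right _ hqmem, h2⟩
            ⟨Finset.mem_union_right _ hpmem, hv⟩)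
      exact hqp ▸ heq
  -- consecutive elements of p are connected (both directions)
  have hchain : List.Chain' (fun a b => P b a = true ∧ P a b = true) p := by
    apply chain'_of_zip
    intro e he
    have : e ∈ M := hsubM (List.mem_toFinset.2 he)
    have h1 := hM.1.1 e this
    exact ⟨h1, hsym _ _ h1⟩
  -- the new edge list
  set N : Finset (Fin n × Fin n) := (pairE p).toFinset with hN
  have hfst : (pairE p).map Prod.fst = p := pairE_fst p hEven
  have hsndperm : List.Perm ((pairE p).map Prod.snd) p := pairE_snd_perm p hEven
  have hfstnd : ((pairE p).map Prod.fst).Nodup := by rw [hfst]; exact hpnd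
  have hsndnd : ((pairE p).map Prod.snd).Nodup := hsndperm.nodup_iff.2 hpnd
  have hpairnd : (pairE p).Nodup := hfstnd.of_map
  have hNcard : N.card = p.length := by
    rw [hN, List.toFinset_card_of_nodup hpairnd, pairE_length p hEven]
  have hNmem : ∀ e ∈ N, e.1 ∈ p ∧ e.2 ∈ p := by
    intro e he
    exact pairE_mem_mem (x := e.1) (y := e.2) (by simpa using List.mem_toFinset.1 he)
  have hNP : ∀ e ∈ N, P e.2 e.1 = true := by
    intro e he
    have := pairE_rel (R := fun a b => P b a = true ∧ P a b = true)
      (fun a b h => ⟨h.2, h.1⟩) (x := e.1) (y := e.2)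
      (by simpa using List.mem_toFinset.1 he) hchain
    exact this.1
  -- the augmented matching
  set M' : Finset (Fin n × Fin n) := (M \ pathEdges p) ∪ N with hM'
  have hMsdiff : ∀ e ∈ M \ pathEdges p, e.1 ∉ p ∧ e.2 ∉ p := by
    intro e he
    obtain ⟨heM, henp⟩ := Finset.mem_sdiff.1 he
    constructor
    · intro h; exact henp (htouch e heM (Or.inl h))
    · intro h; exact henp (htouch e heM (Or.inr h))
  have hdisjMN : Disjoint (M \ pathEdges p) N := by
    rw [Finset.disjoint_left]
    intro e he heN
    exact (hMsdiff e he).1 (hNmem e heN).1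
  have hmatch : IsMatching P M' := by
    refine ⟨?_, ?_, ?_⟩
    · intro e he
      rcases Finset.mem_union.1 he with he | he
      · exact hM.1.1 e (Finset.mem_sdiff.1 he).1
      · exact hNP e he
    · intro e he f hf hfst1
      rcases Finset.mem_union.1 he with he | he <;>
        rcases Finset.mem_union.1 hf with hf | hf
      · exact hM.1.2.1 e (Finset.mem_sdiff.1 he).1 f (Finset.mem_sdiff.1 hf).1 hfst1
      · exact absurd (hfst1 ▸ (hNmem f hf).1) (hMsdiff e he).1
      · exact absurd (hfst1 ▸ (hNmem e he).1) (hMsdiff f hf).1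
      · exact List.inj_on_of_nodup_map hfstnd (List.mem_toFinset.1 he) (List.mem_toFinset.1 hf) hfst1
    · intro e he f hf hsnd1
      rcases Finset.mem_union.1 he with he | he <;>
        rcases Finset.mem_union.1 hf with hf | hf
      · exact hM.1.2.2 e (Finset.mem_sdiff.1 he).1 f (Finset.mem_sdiff.1 hf).1 hsnd1
      · exact absurd (hsnd1 ▸ (hNmem f hf).2) (hMsdiff e he).2
      · exact absurd (hsnd1 ▸ (hNmem e he).2) (hMsdiff f hf).2
      · exact List.inj_on_of_nodup_map hsndnd (List.mem_toFinset.1 he) (List.mem_toFinset.1 hf) hsnd1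
  have hle := hM.2 M' hmatch
  have hcard' : M'.card = M.card - (pathEdges p).card + p.length := by
    rw [hM', Finset.card_union_of_disjoint hdisjMN, Finset.card_sdiff_of_subset hsubM, hNcard]
  have hpe_le : (pathEdges p).card ≤ p.length - 1 := by
    calc (pathEdges p).card ≤ (p.zip p.tail).length := List.toFinset_card_le _
      _ = p.length - 1 := by rw [List.length_zip, List.length_tail]; omega
  have hpe_leM : (pathEdges p).card ≤ M.card := Finset.card_le_card hsubM
  omega
end
end

section
/- A structured matrix Ā ∈ {0,*}^{n×n} is generically diagonalizable if and only if, for every subset S of the strongly connected components of G(Ā), the subgraph of G(Ā) induced by the union of the vertex sets of the components in S is structurally diagonalizable (i.e., the corresponding principal structured submatrix is generically diagonalizable). -/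
noncomputable section
open Matrix

section Aux
open Polynomial

lemma exists_conj_isDiag {α : Type*} [Fintype α] [DecidableEq α]
    (N : Matrix α α ℂ) (Λ : Finset ℂ) (hΛ : Λ.Nonempty)
    (hann : aeval N (∏ l ∈ Λ, (X - C l)) = 0) :
    ∃ T : Matrix α α ℂ, IsUnit T ∧ (T * N * T⁻¹).IsDiag := by
  classical
  set g : ℂ[X] := ∏ l ∈ Λ, (X - C l) with hg
  set e : Module.Basis α ℂ (α → ℂ) := Pi.basisFun ℂ α with he
  set f : Module.End ℂ (α → ℂ) := Matrix.toLinAlgEquiv e N with hf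
  have hNf : LinearMap.toMatrix e e f = N := by
    have := LinearMap.toMatrixAlgEquiv_toLinAlgEquiv e N
    simpa [LinearMap.toMatrixAlgEquiv, AlgEquiv.ofLinearEquiv_apply] using this
  have hfann : aeval f g = 0 := by
    rw [hf, Polynomial.aeval_algHom_apply (Matrix.toLinAlgEquiv e) N g, hann, map_zero]
  -- spanning
  have hspan : (⨆ l : Λ, Module.End.eigenspace f (l : ℂ)) = ⊤ := by
    rw [eq_top_iff]
    intro v _
    have hsum : ∑ l ∈ Λ, Lagrange.basis Λ id l = 1 :=
      Lagrange.sum_basis Function.injective_id.injOn hΛ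
    have hone : (aeval f (1 : ℂ[X])) v = v := by simp
    have hv : v = ∑ l ∈ Λ, (aeval f (Lagrange.basis Λ id l)) v := by
      conv_lhs => rw [← hone, ← hsum]
      rw [map_sum]
      simp [LinearMap.sum_apply]
    rw [hv]
    refine Submodule.sum_mem _ fun l hl => ?_
    refine Submodule.mem_iSup_of_mem ⟨l, hl⟩ ?_
    rw [Module.End.mem_eigenspace_iff]
    have key : (X - C l) * Lagrange.basis Λ id l = C (∏ j ∈ Λ.erase l, (l - j)⁻¹) * g := by
      unfold Lagrange.basis Lagrange.basisDivisor
      rw [Finset.prod_mul_distrib, ← map_prod]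
      rw [hg, ← Finset.mul_prod_erase Λ _ hl]
      simp only [id]
      ring
    have h0 : (aeval f ((X - C l) * Lagrange.basis Λ id l)) v = 0 := by
      rw [key, _root_.map_mul, hfann, mul_zero, LinearMap.zero_apply]
    rw [_root_.map_mul, Module.End.mul_apply, map_sub, aeval_X, aeval_C,
      LinearMap.sub_apply, Module.algebraMap_end_apply, sub_eq_zero] at h0
    exact h0
  have hind : iSupIndep fun l : Λ => Module.End.eigenspace f (l : ℂ) :=
    (Module.End.eigenspaces_iSupIndep f).comp Subtype.val_injective
  have hint : DirectSum.IsInternal fun l : Λ => Module.End.eigenspace f (l : ℂ) :=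
    (DirectSum.isInternal_submodule_iff_iSupIndep_and_iSup_eq_top _).mpr ⟨hind, hspan⟩
  let bs : ∀ l : Λ, Module.Basis (Module.Free.ChooseBasisIndex ℂ (Module.End.eigenspace f (l : ℂ)))
      ℂ (Module.End.eigenspace f (l : ℂ)) := fun l => Module.Free.chooseBasis ℂ _
  let b0 := hint.collectedBasis bs
  let ε := b0.indexEquiv e
  let b := b0.reindex ε
  set Qm := LinearMap.toMatrix e b LinearMap.id with hQm
  set Pm := LinearMap.toMatrix b e LinearMap.id with hPm
  have hQP : Qm * Pm = 1 := by
    rw [hQm, hPm, ← LinearMap.toMatrix_comp b e b, LinearMap.id_comp, LinearMap.toMatrix_id]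
  have hdet : Qm.det * Pm.det = 1 := by rw [← det_mul, hQP, det_one]
  have hunit : IsUnit Qm := (Matrix.isUnit_iff_isUnit_det Qm).mpr (IsUnit.of_mul_eq_one _ hdet)
  have hinv : Qm⁻¹ = Pm := Matrix.inv_eq_right_inv hQP
  refine ⟨Qm, hunit, ?_⟩
  have hDm : Qm * N * Qm⁻¹ = LinearMap.toMatrix b b f := by
    rw [hinv, ← hNf, hQm, hPm, mul_assoc, ← LinearMap.toMatrix_comp b e e, LinearMap.comp_id,
      ← LinearMap.toMatrix_comp b e b, LinearMap.id_comp]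
  rw [hDm]
  intro i j hij
  have hmem : (b j : α → ℂ) ∈ Module.End.eigenspace f ((ε.symm j).1 : ℂ) := by
    rw [Module.Basis.reindex_apply]
    exact hint.collectedBasis_mem bs (ε.symm j)
  have hb : f (b j) = ((ε.symm j).1 : ℂ) • b j := Module.End.mem_eigenspace_iff.mp hmem
  rw [LinearMap.toMatrix_apply, hb]
  simp [Module.Basis.repr_self, Finsupp.single_apply, Ne.symm hij]

lemma sd_conj_pow {α : Type*} [Fintype α] [DecidableEq α] (U V N : Matrix α α ℂ)
    (h1 : U * V = 1) (h2 : V * U = 1) (k : ℕ) :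
    (V * N * U) ^ k = V * N ^ k * U := by
  induction k with
  | zero => simpa using h2.symm
  | succ k ih =>
    rw [pow_succ, ih, pow_succ]
    calc V * N ^ k * U * (V * N * U) = V * N ^ k * (U * V) * (N * U) := by noncomm_ring
    _ = V * (N ^ k * N) * U := by rw [h1]; noncomm_ring

lemma sd_conj_aeval {α : Type*} [Fintype α] [DecidableEq α] (U V N : Matrix α α ℂ)
    (h1 : U * V = 1) (h2 : V * U = 1) (g : ℂ[X]) :
    aeval (V * N * U) g = V * aeval N g * U := by
  rw [aeval_eq_sum_range (p := g) (V * N * U), aeval_eq_sum_range (p := g) N]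
  rw [Finset.mul_sum, Finset.sum_mul]
  refine Finset.sum_congr rfl fun k _ => ?_
  rw [sd_conj_pow U V N h1 h2 k, Matrix.mul_smul, Matrix.smul_mul]

lemma sd_charpoly_conj {α : Type*} [Fintype α] [DecidableEq α] (U V N : Matrix α α ℂ)
    (h1 : U * V = 1) (h2 : V * U = 1) :
    (V * N * U).charpoly = N.charpoly := by
  set Cm : Matrix α α ℂ →+* Matrix α α ℂ[X] := (C : ℂ →+* ℂ[X]).mapMatrix with hCm
  have key : Cm V * N.charmatrix * Cm U = (V * N * U).charmatrix := by
    rw [charmatrix, charmatrix]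
    rw [mul_sub, sub_mul]
    congr 1
    · have hc : Commute (Matrix.scalar α (X : ℂ[X])) (Cm V) :=
        Matrix.scalar_commute _ (fun r' => Commute.all _ _) _
      calc Cm V * Matrix.scalar α (X : ℂ[X]) * Cm U
          = Matrix.scalar α (X : ℂ[X]) * (Cm V * Cm U) := by rw [← hc.eq]; noncomm_ring
        _ = Matrix.scalar α (X : ℂ[X]) := by rw [← _root_.map_mul, h2, _root_.map_one, mul_one]
    · show Cm V * Cm N * Cm U = Cm (V * N * U)
      rw [← _root_.map_mul, ← _root_.map_mul]
  unfold Matrix.charpoly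
  rw [← key, det_mul, det_mul]
  have hd : (Cm V).det * (Cm U).det = 1 := by
    rw [mul_comm, ← det_mul, ← _root_.map_mul, h1, _root_.map_one, det_one]
  calc (Cm V).det * N.charmatrix.det * (Cm U).det
      = ((Cm V).det * (Cm U).det) * N.charmatrix.det := by ring
    _ = N.charmatrix.det := by rw [hd, one_mul]

lemma sd_aeval_roots_charpoly {α : Type*} [Fintype α] [DecidableEq α] [LinearOrder α]
    (N : Matrix α α ℂ)
    (h : ∃ U : Matrix α α ℂ, IsUnit U ∧ (U * N * U⁻¹).IsDiag) :
    aeval N (∏ l ∈ N.charpoly.roots.toFinset, (X - C l)) = 0 := by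
  obtain ⟨U, hU, hdiag⟩ := h
  have hUdet : IsUnit U.det := (Matrix.isUnit_iff_isUnit_det U).mp hU
  have h1 : U * U⁻¹ = 1 := Matrix.mul_nonsing_inv U hUdet
  have h2 : U⁻¹ * U = 1 := Matrix.nonsing_inv_mul U hUdet
  set D := U * N * U⁻¹ with hD
  have hND : N = U⁻¹ * D * U := by
    rw [hD]
    calc N = (U⁻¹ * U) * N * (U⁻¹ * U) := by rw [h2]; noncomm_ring
    _ = U⁻¹ * (U * N * U⁻¹) * U := by noncomm_ring
  have hcharD : D.charpoly = N.charpoly := by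
    have := sd_charpoly_conj U⁻¹ U N h2 h1
    simpa [← hD] using this
  have htri : D.BlockTriangular id := fun i j hlt => hdiag (fun hh => absurd hh (ne_of_gt hlt))
  have hprod : N.charpoly = ∏ i : α, (X - C (D i i)) := by
    rw [← hcharD]; exact charpoly_of_upperTriangular D htri
  have hroot : ∀ i : α, D i i ∈ N.charpoly.roots.toFinset := by
    intro i
    rw [Multiset.mem_toFinset, mem_roots ((Matrix.charpoly_monic N).ne_zero)]
    rw [IsRoot.def, hprod, eval_prod]
    exact Finset.prod_eq_zero (Finset.mem_univ i) (by simp)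
  have hDdiag : Matrix.diagonal D.diag = D := hdiag.diagonal_diag
  set g : ℂ[X] := ∏ l ∈ N.charpoly.roots.toFinset, (X - C l) with hg
  have hDg : aeval D g = 0 := by
    rw [← hDdiag]
    have heq : aeval ((Matrix.diagonalAlgHom (n := α) ℂ) D.diag) g
        = (Matrix.diagonalAlgHom (n := α) ℂ) (aeval D.diag g) :=
      Polynomial.aeval_algHom_apply (Matrix.diagonalAlgHom ℂ) D.diag g
    rw [Matrix.diagonalAlgHom_apply] at heq
    rw [heq]
    have hzero : aeval D.diag g = 0 := by
      funext i
      have h3 : (aeval D.diag g) i = aeval (D.diag i) g :=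
        (Polynomial.aeval_algHom_apply (Pi.evalAlgHom ℂ (fun _ => ℂ) i) D.diag g).symm
      have h4 : aeval (D.diag i) g = eval (D.diag i) g := by
        rw [← Polynomial.coe_aeval_eq_eval]
      rw [h3, h4, hg, eval_prod]
      refine Finset.prod_eq_zero (hroot i) ?_
      simp [Matrix.diag]
    rw [hzero, map_zero]
  rw [hND, sd_conj_aeval U U⁻¹ D h1 h2, hDg, mul_zero, zero_mul]

lemma sd_charpoly_eq {n : ℕ} (b : Fin n → ℕ) (A B : Matrix (Fin n) (Fin n) ℝ)
    (hA : A.BlockTriangular b) (hB : B.BlockTriangular b)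
    (hAB : ∀ i j, b i = b j → A i j = B i j) : A.charpoly = B.charpoly := by
  rw [hA.charpoly, hB.charpoly]
  refine Finset.prod_congr rfl fun a _ => ?_
  congr 1
  ext i j
  exact hAB i j (i.2.trans j.2.symm)

lemma sd_pow_submatrix {n : ℕ} (S : Finset (Fin n)) (N : Matrix (Fin n) (Fin n) ℂ)
    (hz : ∀ i j, i ∈ S → j ∉ S → N i j = 0)
    (hz' : ∀ i j, i ∉ S → j ∈ S → N i j = 0) (k : ℕ) :
    (N.submatrix (Subtype.val : ↥S → Fin n) (Subtype.val : ↥S → Fin n)) ^ k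
      = (N ^ k).submatrix Subtype.val Subtype.val := by
  classical
  induction k with
  | zero =>
    ext i j
    simp only [pow_zero, Matrix.one_apply, Matrix.submatrix_apply, Subtype.ext_iff]
  | succ k ih =>
    ext i j
    rw [pow_succ, pow_succ, Matrix.mul_apply, ih, Matrix.submatrix_apply, Matrix.mul_apply]
    have hs : ∑ u : Fin n, (N ^ k) (i : Fin n) u * N u (j : Fin n)
        = ∑ u ∈ S, (N ^ k) (i : Fin n) u * N u (j : Fin n) :=
      (Finset.sum_subset (Finset.subset_univ S) fun u _ hu => by
        rw [hz' u j hu j.2, mul_zero]).symm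
    have hcs : ∑ u : ↥S, (N ^ k) (i : Fin n) (↑u) * N (↑u) (j : Fin n)
        = ∑ u ∈ S, (N ^ k) (i : Fin n) u * N u (j : Fin n) := Finset.sum_coe_sort S (fun u => (N ^ k) (i : Fin n) u * N u (j : Fin n))
    rw [hs, ← hcs]
    rfl

lemma sd_aeval_submatrix {n : ℕ} (S : Finset (Fin n)) (N : Matrix (Fin n) (Fin n) ℂ)
    (hz : ∀ i j, i ∈ S → j ∉ S → N i j = 0)
    (hz' : ∀ i j, i ∉ S → j ∈ S → N i j = 0) (g : ℂ[X]) :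
    aeval (N.submatrix (Subtype.val : ↥S → Fin n) (Subtype.val : ↥S → Fin n)) g
      = (aeval N g).submatrix Subtype.val Subtype.val := by
  rw [aeval_eq_sum_range (p := g) N, aeval_eq_sum_range (p := g)]
  ext i j
  rw [Matrix.sum_apply, Matrix.submatrix_apply, Matrix.sum_apply]
  refine Finset.sum_congr rfl fun k _ => ?_
  rw [Matrix.smul_apply, Matrix.smul_apply, sd_pow_submatrix S N hz hz' k, Matrix.submatrix_apply]

lemma sd_eval_aeval {σ τ : Type*} (f : σ → MvPolynomial τ ℝ) (g : τ → ℝ)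
    (q : MvPolynomial σ ℝ) :
    MvPolynomial.eval g (MvPolynomial.aeval f q)
      = MvPolynomial.eval (fun v => MvPolynomial.eval g (f v)) q := by
  induction q using MvPolynomial.induction_on with
  | C a => simp
  | add p q hp hq => rw [map_add, map_add, hp, hq, map_add]
  | mul_X p v hp =>
    rw [_root_.map_mul, _root_.map_mul, MvPolynomial.aeval_X, hp, _root_.map_mul,
      MvPolynomial.eval_X]

lemma sd_phi_eval {σ : Type*} (c : σ → Prop) [DecidablePred c]
    (q : MvPolynomial σ ℝ) (t : ℝ) (θ : σ → ℝ) :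
    Polynomial.eval t ((Polynomial.map (MvPolynomial.eval θ))
      (MvPolynomial.aeval (fun v => if c v then Polynomial.C (MvPolynomial.X v) * Polynomial.X
        else Polynomial.C (MvPolynomial.X v)) q))
      = MvPolynomial.eval (fun v => if c v then t * θ v else θ v) q := by
  induction q using MvPolynomial.induction_on with
  | C a => simp
  | add p q hp hq =>
    rw [map_add, Polynomial.map_add, Polynomial.eval_add, hp, hq, map_add]
  | mul_X p v hp =>
    rw [_root_.map_mul, MvPolynomial.aeval_X, Polynomial.map_mul, Polynomial.eval_mul, hp,
      _root_.map_mul, MvPolynomial.eval_X]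
    by_cases h : c v
    · rw [if_pos h, if_pos h, Polynomial.map_mul, Polynomial.map_C, Polynomial.map_X,
        Polynomial.eval_mul, Polynomial.eval_C, Polynomial.eval_X, MvPolynomial.eval_X]
      ring
    · rw [if_neg h, if_neg h, Polynomial.map_C, Polynomial.eval_C, MvPolynomial.eval_X]

lemma sd_diag_reindex {α β : Type*} [Fintype α] [DecidableEq α] [Fintype β] [DecidableEq β]
    (e : β ≃ α) (M : Matrix α α ℝ) (h : IsDiagonalizable M) :
    IsDiagonalizable (M.submatrix e e) := by
  obtain ⟨T, hT, hdiag⟩ := h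
  have hTdet : IsUnit T.det := (Matrix.isUnit_iff_isUnit_det T).mp hT
  refine ⟨T.submatrix e e, ?_, ?_⟩
  · rw [Matrix.isUnit_iff_isUnit_det, Matrix.det_submatrix_equiv_self]; exact hTdet
  · have hinv : (T.submatrix e e)⁻¹ = T⁻¹.submatrix e e := by
      apply Matrix.inv_eq_right_inv
      rw [Matrix.submatrix_mul_equiv, Matrix.mul_nonsing_inv T hTdet, Matrix.submatrix_one_equiv]
    have hmap : (M.submatrix (e : β → α) e).map (fun x => (x : ℂ))
        = (M.map fun x => (x : ℂ)).submatrix e e := rfl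
    rw [hinv, hmap, Matrix.submatrix_mul_equiv, Matrix.submatrix_mul_equiv]
    intro i j hij
    exact hdiag fun hc => hij (e.injective hc)

end Aux
/-- Ā is generically diagonalizable iff for every subset S of the
strongly connected components of G(Ā) (encoded as a set of vertices closed under
mutual reachability), the principal structured submatrix on the union of the
corresponding vertex sets is generically diagonalizable. Here the edge x_i → x_j
exists iff `P j i = *`. -/
theorem genericallyDiagonalizable_iff_all_SCC_unions
    (n : ℕ) (P : Fin n → Fin n → Bool) :
    GenericallyDiagonalizable P ↔
      ∀ S : Finset (Fin n),
        (∀ i ∈ S, ∀ j : Fin n,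
          (Relation.ReflTransGen (fun a b => P b a = true) i j ∧
           Relation.ReflTransGen (fun a b => P b a = true) j i) → j ∈ S) →
        GenericallyDiagonalizable (fun i j : ↥S => P (i : Fin n) (j : Fin n)) := by
  classical
  constructor
  · intro hGD S hS
    by_cases hSne : S.Nonempty
    swap
    · have hS0 : S = ∅ := Finset.not_nonempty_iff_eq_empty.mp hSne
      refine ⟨1, one_ne_zero, fun σ _ => ⟨1, isUnit_one, fun i j hij => ?_⟩⟩
      exact absurd i.2 (by simp [hS0])
    have hn : 0 < n := (hSne.choose).pos
    obtain ⟨p, hp, hgen⟩ := hGD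
    set reach : Fin n → Fin n → Prop :=
      Relation.ReflTransGen (fun a b => P b a = true) with hreach
    set sc : {ij : Fin n × Fin n // P ij.1 ij.2 = true} → Prop :=
      fun v => ¬ (reach v.1.1 v.1.2 ∧ reach v.1.2 v.1.1) ∧
        ¬ (v.1.1 ∈ S ∧ v.1.2 ∈ S) with hsc
    set φ : ℝ → ({ij : Fin n × Fin n // P ij.1 ij.2 = true} → ℝ) →
        ({ij : Fin n × Fin n // P ij.1 ij.2 = true} → ℝ) :=
      fun t θ v => if sc v then t * θ v else θ v with hφ
    set Φ : Polynomial (MvPolynomial {ij : Fin n × Fin n // P ij.1 ij.2 = true} ℝ) :=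
      MvPolynomial.aeval (fun v => if sc v then Polynomial.C (MvPolynomial.X v) * Polynomial.X
        else Polynomial.C (MvPolynomial.X v)) p with hΦ
    have hΦeval : ∀ t θ, Polynomial.eval t (Φ.map (MvPolynomial.eval θ))
        = MvPolynomial.eval (φ t θ) p := fun t θ => sd_phi_eval sc p t θ
    have hΦne : Φ ≠ 0 := by
      intro h0
      apply hp
      apply MvPolynomial.funext
      intro θ
      have h1 := hΦeval 1 θ
      rw [h0] at h1
      simp only [Polynomial.map_zero, Polynomial.eval_zero] at h1
      have h2 : φ 1 θ = θ := funext fun v => by simp [hφ]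
      rw [h2] at h1
      rw [← h1, map_zero]
    have hsupp : Φ.support.Nonempty := Finset.nonempty_iff_ne_empty.mpr
      (fun h => hΦne (Polynomial.support_eq_empty.mp h))
    obtain ⟨k, hk1⟩ := hsupp
    have hk : Φ.coeff k ≠ 0 := Polynomial.mem_support_iff.mp hk1
    set r := Φ.coeff k with hr
    have hex : ∃ θs, MvPolynomial.eval θs r ≠ 0 := by
      by_contra hc
      push_neg at hc
      exact hk (MvPolynomial.funext fun x => by rw [hc x, map_zero])
    obtain ⟨θs, hθs⟩ := hex
    -- assemble parameters
    set Θ : ({ij : ↥S × ↥S // P (ij.1 : Fin n) (ij.2 : Fin n) = true} → ℝ) →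
        ({ij : Fin n × Fin n // P ij.1 ij.2 = true} → ℝ) :=
      fun σ v => if h : v.1.1 ∈ S ∧ v.1.2 ∈ S then
        σ ⟨(⟨v.1.1, h.1⟩, ⟨v.1.2, h.2⟩), v.2⟩ else θs v with hΘ
    set q : MvPolynomial {ij : ↥S × ↥S // P (ij.1 : Fin n) (ij.2 : Fin n) = true} ℝ :=
      MvPolynomial.aeval (fun v => if h : v.1.1 ∈ S ∧ v.1.2 ∈ S then
        (MvPolynomial.X (⟨(⟨v.1.1, h.1⟩, ⟨v.1.2, h.2⟩), v.2⟩ :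
          {ij : ↥S × ↥S // P (ij.1 : Fin n) (ij.2 : Fin n) = true})
          : MvPolynomial {ij : ↥S × ↥S // P (ij.1 : Fin n) (ij.2 : Fin n) = true} ℝ)
        else MvPolynomial.C (θs v)) r with hq
    have hqe : ∀ σ, MvPolynomial.eval σ q = MvPolynomial.eval (Θ σ) r := by
      intro σ
      rw [hq, sd_eval_aeval]
      refine congrArg (fun gg => MvPolynomial.eval gg r) ?_
      funext v
      by_cases h : v.1.1 ∈ S ∧ v.1.2 ∈ S
      · simp [hΘ, h]
      · simp [hΘ, h]
    have hq0 : q ≠ 0 := by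
      intro h0
      apply hθs
      have hσs := hqe (fun w => θs ⟨((w.1.1 : Fin n), (w.1.2 : Fin n)), w.2⟩)
      rw [h0, map_zero] at hσs
      have hid : Θ (fun w => θs ⟨((w.1.1 : Fin n), (w.1.2 : Fin n)), w.2⟩) = θs := by
        funext v
        by_cases h : v.1.1 ∈ S ∧ v.1.2 ∈ S
        · simp only [hΘ, dif_pos h]
        · simp [hΘ, h]
      rw [hid] at hσs
      exact hσs.symm
    refine ⟨q, hq0, fun σ hσ => ?_⟩
    set θ : {ij : Fin n × Fin n // P ij.1 ij.2 = true} → ℝ := Θ σ with hθdef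
    have hrθ : MvPolynomial.eval θ r ≠ 0 := by rw [← hqe]; exact hσ
    set F := Φ.map (MvPolynomial.eval θ) with hF
    have hFne : F ≠ 0 := by
      intro h0
      apply hrθ
      have := Polynomial.coeff_map (MvPolynomial.eval θ) k (p := Φ)
      rw [← hF, h0] at this
      simpa using this.symm
    have hroots : {t : ℝ | F.IsRoot t}.Finite := by
      by_contra hinf
      exact hFne (F.eq_zero_of_infinite_isRoot hinf)
    have hTinf : {t : ℝ | MvPolynomial.eval (φ t θ) p ≠ 0}.Infinite := by
      refine Set.Infinite.mono ?_ hroots.infinite_compl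
      intro t ht
      simp only [Set.mem_compl_iff, Set.mem_setOf_eq] at ht ⊢
      rw [← hΦeval t θ]
      exact ht
    -- the weight function b
    set desc : Fin n → Finset (Fin n) := fun i => Finset.univ.filter (fun u => reach i u)
      with hdesc
    set b : Fin n → ℕ := fun i => (desc i).card with hb
    have hdsub : ∀ i j : Fin n, P i j = true → desc i ⊆ desc j := by
      intro i j hij u hu
      simp only [hdesc, Finset.mem_filter, Finset.mem_univ, true_and] at hu ⊢
      have h1 : reach j i := Relation.ReflTransGen.single hij
      exact h1.trans hu
    have hble : ∀ i j, P i j = true → b i ≤ b j :=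
      fun i j h => Finset.card_le_card (hdsub i j h)
    have hblt : ∀ v : {ij : Fin n × Fin n // P ij.1 ij.2 = true},
        sc v → b v.1.1 < b v.1.2 := by
      intro v hv
      refine Finset.card_lt_card ?_
      rw [Finset.ssubset_def]
      refine ⟨hdsub _ _ v.2, fun hcon => ?_⟩
      have h2 : v.1.2 ∈ desc v.1.2 := by
        simp only [hdesc, Finset.mem_filter, Finset.mem_univ, true_and]
        exact Relation.ReflTransGen.refl
      have h3 := hcon h2
      simp only [hdesc, Finset.mem_filter, Finset.mem_univ, true_and] at h3
      exact hv.1 ⟨h3, Relation.ReflTransGen.single v.2⟩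
    have hBT : ∀ θ', (toMat P θ').BlockTriangular b := by
      intro θ' i j hlt
      by_cases h : P i j = true
      · exact absurd (hble i j h) (not_le.mpr hlt)
      · show (toMat P θ') i j = 0
        simp [toMat, h]
    set A : ℝ → Matrix (Fin n) (Fin n) ℝ := fun t => toMat P (φ t θ) with hA
    have hchar : ∀ t, (A t).charpoly = (A 0).charpoly := by
      intro t
      refine sd_charpoly_eq b _ _ (hBT _) (hBT _) ?_
      intro i j hbij
      by_cases h : P i j = true
      · show (toMat P (φ t θ)) i j = (toMat P (φ 0 θ)) i j
        have hnsc : ¬ sc ⟨(i, j), h⟩ := fun hscv => absurd hbij (ne_of_lt (hblt _ hscv))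
        simp [toMat, h, hφ, hnsc]
      · show (toMat P (φ t θ)) i j = (toMat P (φ 0 θ)) i j
        simp [toMat, h]
    set Ac : ℝ → Matrix (Fin n) (Fin n) ℂ := fun t => (A t).map (fun x => (x : ℂ)) with hAc
    have hcharc : ∀ t, (Ac t).charpoly = (Ac 0).charpoly := by
      intro t
      have h1 : (Ac t).charpoly = ((A t).charpoly).map Complex.ofRealHom :=
        Matrix.charpoly_map (A t) Complex.ofRealHom
      have h2 : (Ac 0).charpoly = ((A 0).charpoly).map Complex.ofRealHom :=
        Matrix.charpoly_map (A 0) Complex.ofRealHom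
      rw [h1, h2, hchar t]
    set Λ : Finset ℂ := ((Ac 0).charpoly).roots.toFinset with hΛ
    have hmonic := Matrix.charpoly_monic (Ac 0)
    have hdeg : (Ac 0).charpoly.natDegree = n := by
      rw [Matrix.charpoly_natDegree_eq_dim]
      simp
    have hΛne : Λ.Nonempty := by
      have hdegpos : 0 < (Ac 0).charpoly.degree := by
        rw [Polynomial.degree_eq_natDegree hmonic.ne_zero, hdeg]
        exact_mod_cast hn
      obtain ⟨z, hz⟩ := Complex.exists_root hdegpos
      exact ⟨z, Multiset.mem_toFinset.mpr (Polynomial.mem_roots'.mpr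
        ⟨hmonic.ne_zero, hz⟩)⟩
    set g : Polynomial ℂ := ∏ l ∈ Λ, (Polynomial.X - Polynomial.C l) with hg
    have hannt : ∀ t, MvPolynomial.eval (φ t θ) p ≠ 0 → Polynomial.aeval (Ac t) g = 0 := by
      intro t ht
      obtain ⟨U, hU, hUdiag⟩ := hgen (φ t θ) ht
      have h0 := sd_aeval_roots_charpoly (Ac t) ⟨U, hU, hUdiag⟩
      rw [hcharc t] at h0
      exact h0
    -- polynomial entries matrix
    set Ap : Matrix (Fin n) (Fin n) (Polynomial ℂ) := Matrix.of fun i j =>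
      if h : P i j = true then
        (if sc ⟨(i, j), h⟩ then Polynomial.C ((θ ⟨(i, j), h⟩ : ℝ) : ℂ) * Polynomial.X
          else Polynomial.C ((θ ⟨(i, j), h⟩ : ℝ) : ℂ))
      else 0 with hAp
    have hApt : ∀ t : ℝ, Ap.map (Polynomial.aeval ((t : ℝ) : ℂ)) = Ac t := by
      intro t
      ext i j
      simp only [Matrix.map_apply, hAc]
      show Polynomial.aeval ((t : ℝ) : ℂ) (Ap i j) = (((A t) i j : ℝ) : ℂ)
      by_cases h : P i j = true
      · have hAt : (A t) i j = if sc ⟨(i, j), h⟩ then t * θ ⟨(i, j), h⟩ else θ ⟨(i, j), h⟩ := by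
          simp [hA, toMat, h, hφ]
        have hApij : Ap i j = if sc ⟨(i, j), h⟩ then
            Polynomial.C ((θ ⟨(i, j), h⟩ : ℝ) : ℂ) * Polynomial.X
            else Polynomial.C ((θ ⟨(i, j), h⟩ : ℝ) : ℂ) := by simp [hAp, h]
        rw [hAt, hApij]
        by_cases hsv : sc ⟨(i, j), h⟩
        · rw [if_pos hsv, if_pos hsv]
          simp only [_root_.map_mul, Polynomial.aeval_C, Polynomial.aeval_X]
          push_cast
          simp
          ring
        · rw [if_neg hsv, if_neg hsv, Polynomial.aeval_C]
          simp
      · have hAt : (A t) i j = 0 := by simp [hA, toMat, h]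
        have hApij : Ap i j = 0 := by simp [hAp, h]
        rw [hAt, hApij, map_zero]
        simp
    set Nmat := Polynomial.aeval Ap g with hNmatdef
    have hψ : ∀ t : ℝ, Polynomial.aeval (Ac t) g = Nmat.map (Polynomial.aeval ((t : ℝ) : ℂ)) := by
      intro t
      calc Polynomial.aeval (Ac t) g
          = Polynomial.aeval ((Polynomial.aeval ((t : ℝ) : ℂ)).mapMatrix Ap) g := by
            rw [AlgHom.mapMatrix_apply, hApt t]
        _ = (Polynomial.aeval ((t : ℝ) : ℂ)).mapMatrix (Polynomial.aeval Ap g) :=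
            Polynomial.aeval_algHom_apply _ Ap g
        _ = Nmat.map (Polynomial.aeval ((t : ℝ) : ℂ)) := by
            rw [AlgHom.mapMatrix_apply, hNmatdef]
    have hNzero : Nmat = 0 := by
      refine Matrix.ext fun i j => ?_
      show Nmat i j = 0
      apply Polynomial.eq_zero_of_infinite_isRoot
      have himg : ((fun x : ℝ => (x : ℂ)) '' {t : ℝ | MvPolynomial.eval (φ t θ) p ≠ 0}).Infinite :=
        hTinf.image (Set.injOn_of_injective Complex.ofReal_injective)
      refine himg.mono ?_
      rintro z ⟨t, ht, rfl⟩
      show (Nmat i j).IsRoot ((t : ℝ) : ℂ)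
      have h0 := hannt t ht
      rw [hψ t] at h0
      have h1 : (Nmat.map (Polynomial.aeval ((t : ℝ) : ℂ))) i j = 0 := by rw [h0]; rfl
      rw [Matrix.map_apply] at h1
      rw [Polynomial.IsRoot.def, ← Polynomial.coe_aeval_eq_eval]
      exact h1
    have hA0g : Polynomial.aeval (Ac 0) g = 0 := by
      rw [hψ 0, hNzero]
      refine Matrix.ext fun i j => ?_
      simp
    have hz1 : ∀ i j, i ∈ S → j ∉ S → (Ac 0) i j = 0 := by
      intro i j hi hj
      have h0 : (A 0) i j = 0 := by
        by_cases h : P i j = true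
        · have hscv : sc ⟨(i, j), h⟩ := by
            constructor
            · intro hss
              exact hj (hS i hi j ⟨hss.1, hss.2⟩)
            · intro hmem
              exact hj hmem.2
          show (A 0) i j = 0
          simp only [hA, toMat, Matrix.of_apply, dif_pos h, hφ]
          split_ifs with hcond
          · exact zero_mul _
          · exact absurd hscv hcond
        · simp [hA, toMat, h]
      simp [hAc, Matrix.map_apply, h0]
    have hz2 : ∀ i j, i ∉ S → j ∈ S → (Ac 0) i j = 0 := by
      intro i j hi hj
      have h0 : (A 0) i j = 0 := by
        by_cases h : P i j = true
        · have hscv : sc ⟨(i, j), h⟩ := by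
            constructor
            · intro hss
              exact hi (hS j hj i ⟨hss.2, hss.1⟩)
            · intro hmem
              exact hi hmem.1
          show (A 0) i j = 0
          simp only [hA, toMat, Matrix.of_apply, dif_pos h, hφ]
          split_ifs with hcond
          · exact zero_mul _
          · exact absurd hscv hcond
        · simp [hA, toMat, h]
      simp [hAc, Matrix.map_apply, h0]
    have hsubeq : (Ac 0).submatrix (Subtype.val : ↥S → Fin n) Subtype.val
        = (toMat (fun i j : ↥S => P (i : Fin n) (j : Fin n)) σ).map (fun x => (x : ℂ)) := by
      ext i j
      simp only [Matrix.submatrix_apply, Matrix.map_apply, hAc]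
      have hmain : (A 0) (i : Fin n) (j : Fin n)
          = toMat (fun i j : ↥S => P (i : Fin n) (j : Fin n)) σ i j := by
        by_cases h : P (i : Fin n) (j : Fin n) = true
        · have hnsc : ¬ sc ⟨((i : Fin n), (j : Fin n)), h⟩ := fun hscv => hscv.2 ⟨i.2, j.2⟩
          have hθv : θ ⟨((i : Fin n), (j : Fin n)), h⟩ = σ ⟨(i, j), h⟩ := by
            simp only [hθdef, hΘ, dif_pos (⟨i.2, j.2⟩ : (i : Fin n) ∈ S ∧ (j : Fin n) ∈ S)]
          show (A 0) (i : Fin n) (j : Fin n) = _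
          simp only [hA, toMat, Matrix.of_apply, dif_pos h, hφ]
          split_ifs with hcond
          · exact absurd hcond hnsc
          · rw [hθv]
        · simp [toMat, hA, h]
      rw [hmain]
    have hsubann : Polynomial.aeval
        ((toMat (fun i j : ↥S => P (i : Fin n) (j : Fin n)) σ).map (fun x => (x : ℂ))) g
          = 0 := by
      rw [← hsubeq, sd_aeval_submatrix S (Ac 0) hz1 hz2 g, hA0g]
      refine Matrix.ext fun i j => ?_
      simp
    exact exists_conj_isDiag _ Λ hΛne hsubann

  · intro h
    obtain ⟨p, hp, hgen⟩ := h Finset.univ (fun i _ j _ => Finset.mem_univ j)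
    let e : ↥(Finset.univ : Finset (Fin n)) ≃ Fin n :=
      Equiv.subtypeUnivEquiv (fun x => Finset.mem_univ x)
    let vm : {ij : ↥(Finset.univ : Finset (Fin n)) × ↥(Finset.univ : Finset (Fin n)) //
        P (ij.1 : Fin n) (ij.2 : Fin n) = true} → {ij : Fin n × Fin n // P ij.1 ij.2 = true} :=
      fun w => ⟨((w.1.1 : Fin n), (w.1.2 : Fin n)), w.2⟩
    have hvm : Function.Injective vm := by
      rintro ⟨⟨⟨a1, _⟩, ⟨a2, _⟩⟩, _⟩ ⟨⟨⟨b1, _⟩, ⟨b2, _⟩⟩, _⟩ hab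
      simp only [vm, Subtype.mk.injEq, Prod.mk.injEq] at hab ⊢
      exact hab
    refine ⟨MvPolynomial.rename vm p, ?_, fun θ hθ => ?_⟩
    · intro h0
      apply hp
      apply MvPolynomial.rename_injective vm hvm
      rw [h0, map_zero]
    · have hev : MvPolynomial.eval (θ ∘ vm) p ≠ 0 := by
        rwa [← MvPolynomial.eval_rename]
      have hdia := hgen (θ ∘ vm) hev
      have hmat : toMat P θ
          = (toMat (fun i j : ↥(Finset.univ : Finset (Fin n)) => P (i : Fin n) (j : Fin n))
              (θ ∘ vm)).submatrix e.symm e.symm := by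
        ext i j
        rfl
      rw [hmat]
      exact sd_diag_reindex e.symm _ hdia
end
end

section
/- Let A ∈ ℝ^{n×n} be diagonalizable with distinct eigenvalues λ_1 = 0, λ_2,…,λ_q where each nonzero eigenvalue λ_i (i ≥ 2) is simple and controllable for (A,B) (i.e., rank[A − λ_i I, B] = n). Then rank Q(A,B) = rank[A, B], where Q(A,B) = [B, AB, …, A^{n−1}B]. -/
noncomputable section
open Matrix

namespace CtrbAux
open Polynomial Finset

variable {K : Type*} [Field K] {n m : ℕ}

/-- generic controllability matrix over any field -/
def ctrb (A : Matrix (Fin n) (Fin n) K) (B : Matrix (Fin n) (Fin m) K) :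
    Matrix (Fin n) (Fin n × Fin m) K :=
  Matrix.of fun i kj => (A ^ (kj.1 : ℕ) * B) i kj.2

lemma ctrb_mulVec (A : Matrix (Fin n) (Fin n) K) (B : Matrix (Fin n) (Fin m) K)
    (x : Fin n × Fin m → K) :
    ctrb A B *ᵥ x = ∑ k : Fin n, (A ^ (k : ℕ) * B) *ᵥ (fun j => x (k, j)) := by
  ext i
  simp [ctrb, mulVec, dotProduct, Fintype.sum_prod_type, Finset.sum_apply]

lemma mem_range_ctrb (A : Matrix (Fin n) (Fin n) K) (B : Matrix (Fin n) (Fin m) K)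
    (k : Fin n) (y : Fin m → K) :
    (A ^ (k : ℕ) * B) *ᵥ y ∈ LinearMap.range (ctrb A B).mulVecLin := by
  refine ⟨fun kj => if kj.1 = k then y kj.2 else 0, ?_⟩
  ext i
  simp only [mulVecLin_apply, ctrb_mulVec]
  rw [Finset.sum_apply]
  rw [Finset.sum_eq_single k]
  · simp
  · intro l _ hl
    simp only [mulVec, dotProduct]
    simp [hl]
  · simp

lemma range_fromColumns {p : ℕ} (M : Matrix (Fin n) (Fin p) K) (N : Matrix (Fin n) (Fin m) K) :
    LinearMap.range (fromCols M N).mulVecLin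
      = LinearMap.range M.mulVecLin ⊔ LinearMap.range N.mulVecLin := by
  apply le_antisymm
  · rintro _ ⟨x, rfl⟩
    have : x = Sum.elim (x ∘ Sum.inl) (x ∘ Sum.inr) := by
      ext (i | i) <;> rfl
    rw [mulVecLin_apply, this, fromCols_mulVec_sumElim]
    exact Submodule.add_mem _ (Submodule.mem_sup_left ⟨_, rfl⟩)
      (Submodule.mem_sup_right ⟨_, rfl⟩)
  · rw [sup_le_iff]
    constructor
    · rintro _ ⟨v, rfl⟩
      refine ⟨Sum.elim v 0, ?_⟩
      rw [mulVecLin_apply, fromCols_mulVec_sumElim, mulVec_zero, add_zero, mulVecLin_apply]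
    · rintro _ ⟨v, rfl⟩
      refine ⟨Sum.elim 0 v, ?_⟩
      rw [mulVecLin_apply, fromCols_mulVec_sumElim, mulVec_zero, zero_add, mulVecLin_apply]

lemma eig_pow_mulVec {A : Matrix (Fin n) (Fin n) K} {μ : K} {v : Fin n → K}
    (h : A *ᵥ v = μ • v) (k : ℕ) : A ^ k *ᵥ v = μ ^ k • v := by
  induction k with
  | zero => simp
  | succ k ih =>
      rw [pow_succ, ← mulVec_mulVec, h, mulVec_smul, ih, smul_smul, pow_succ]
      ring_nf

lemma eig_aeval_mulVec {A : Matrix (Fin n) (Fin n) K} {μ : K} {v : Fin n → K}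
    (h : A *ᵥ v = μ • v) (p : K[X]) :
    (Polynomial.aeval A p) *ᵥ v = p.eval μ • v := by
  induction p using Polynomial.induction_on' with
  | add p q hp hq => rw [map_add, add_mulVec, hp, hq, eval_add, add_smul]
  | monomial k a =>
      rw [aeval_monomial, eval_monomial, ← mulVec_mulVec, eig_pow_mulVec h,
        mulVec_smul]
      have : (algebraMap K (Matrix (Fin n) (Fin n) K)) a *ᵥ v = a • v := by
        rw [Algebra.algebraMap_eq_smul_one, smul_mulVec, one_mulVec]
      rw [this, smul_smul, mul_comm]

lemma charpoly_conj (S M : Matrix (Fin n) (Fin n) K) (hS : IsUnit S) :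
    (S * M * S⁻¹).charpoly = M.charpoly := by
  have hdet : IsUnit S.det := (isUnit_iff_isUnit_det S).mp hS
  have h1 : S * S⁻¹ = 1 := mul_nonsing_inv S hdet
  set f : Matrix (Fin n) (Fin n) K →+* Matrix (Fin n) (Fin n) K[X] :=
    (C : K →+* K[X]).mapMatrix with hf
  have h2 : S⁻¹ * S = 1 := nonsing_inv_mul S hdet
  have key : f S * charmatrix M * f S⁻¹ = charmatrix (S * M * S⁻¹) := by
    rw [charmatrix, charmatrix, mul_sub, sub_mul]
    congr 1
    · rw [← (scalar_commute (X : K[X]) (fun r => mul_comm _ r) (f S)).eq, mul_assoc,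
        ← _root_.map_mul, h1, RingHom.map_one, mul_one]
    · rw [← _root_.map_mul, ← _root_.map_mul]
  have hone : (f S⁻¹).det * (f S).det = 1 := by
    rw [← det_mul, ← _root_.map_mul, h2, RingHom.map_one, det_one]
  rw [Matrix.charpoly, Matrix.charpoly, ← key, det_mul, det_mul, mul_comm, ← mul_assoc,
    hone, one_mul]

lemma charpoly_isDiag (D : Matrix (Fin n) (Fin n) K) (hD : D.IsDiag) :
    D.charpoly = ∏ i : Fin n, (X - C (D i i)) :=
  charpoly_of_upperTriangular D (fun i j hij => hD (ne_of_gt hij))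

lemma sum_mulVec {ι : Type*} {p : ℕ} (s : Finset ι) (f : ι → Matrix (Fin n) (Fin p) K)
    (v : Fin p → K) : (∑ i ∈ s, f i) *ᵥ v = ∑ i ∈ s, f i *ᵥ v := by
  ext r
  simp only [mulVec, dotProduct, Finset.sum_apply, Matrix.sum_apply, Finset.sum_mul]
  rw [Finset.sum_comm]

theorem mulVec_mem_range_ctrb (A : Matrix (Fin n) (Fin n) K) (B : Matrix (Fin n) (Fin m) K)
    (S : Matrix (Fin n) (Fin n) K) (hS : IsUnit S) (hdiag : (S * A * S⁻¹).IsDiag)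
    (hev : ∀ μ : K, μ ≠ 0 → A.charpoly.IsRoot μ →
      A.charpoly.rootMultiplicity μ = 1 ∧
      (Matrix.fromCols (A - μ • (1 : Matrix (Fin n) (Fin n) K)) B).rank = n)
    (v : Fin n → K) : A *ᵥ v ∈ LinearMap.range (ctrb A B).mulVecLin := by
  classical
  set D := S * A * S⁻¹ with hD
  have hdet : IsUnit S.det := (isUnit_iff_isUnit_det S).mp hS
  have hTS : S⁻¹ * S = 1 := nonsing_inv_mul S hdet
  have hST : S * S⁻¹ = 1 := mul_nonsing_inv S hdet
  have hAT : A * S⁻¹ = S⁻¹ * D := by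
    rw [hD, ← mul_assoc, ← mul_assoc, hTS, one_mul]
  have hchar : A.charpoly = ∏ i : Fin n, (X - C (D i i)) := by
    rw [← charpoly_conj S A hS]
    exact charpoly_isDiag _ hdiag
  -- eigenvector property of columns of S⁻¹
  have heig : ∀ j : Fin n, A *ᵥ (fun i => S⁻¹ i j) = D j j • (fun i => S⁻¹ i j) := by
    intro j
    ext i
    have h1 : (A *ᵥ (fun i => S⁻¹ i j)) i = (A * S⁻¹) i j := by
      simp [mulVec, dotProduct, mul_apply]
    rw [h1, hAT, mul_apply, Finset.sum_eq_single j]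
    · simp [mul_comm]
    · intro k _ hk
      rw [hdiag hk, mul_zero]
    · simp
  -- each scaled eigenvector is in the range
  have hcol : ∀ j : Fin n, D j j • (fun i => S⁻¹ i j) ∈ LinearMap.range (ctrb A B).mulVecLin := by
    intro j
    by_cases hd : D j j = 0
    · rw [hd, zero_smul]; exact Submodule.zero_mem _
    have hroot : A.charpoly.IsRoot (D j j) := by
      rw [hchar, IsRoot, eval_prod]
      exact Finset.prod_eq_zero (Finset.mem_univ j) (by simp)
    obtain ⟨hmult, hrank⟩ := hev (D j j) hd hroot
    -- simplicity
    have hsimple : ∀ l : Fin n, l ≠ j → D l l ≠ D j j := by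
      rw [hchar] at hmult
      have hprod : (∏ i : Fin n, (X - C (D i i)))
          = ((Finset.univ.val.map (fun i => D i i)).map (fun a => X - C a)).prod := by
        rw [Multiset.map_map]; rfl
      rw [hprod, ← Polynomial.count_roots, Polynomial.roots_multiset_prod_X_sub_C,
        Multiset.count_map] at hmult
      obtain ⟨a, ha⟩ := Multiset.card_eq_one.mp hmult
      intro l hl hDl
      have hjmem : j ∈ Multiset.filter (fun i => D j j = D i i) Finset.univ.val := by
        simp [Multiset.mem_filter]
      have hlmem : l ∈ Multiset.filter (fun i => D j j = D i i) Finset.univ.val := by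
        simp [Multiset.mem_filter, hDl.symm]
      rw [ha, Multiset.mem_singleton] at hjmem hlmem
      exact hl (hlmem.trans hjmem.symm)
    -- controllability / PBH
    have htop : LinearMap.range (A - D j j • (1 : Matrix (Fin n) (Fin n) K)).mulVecLin
        ⊔ LinearMap.range B.mulVecLin = ⊤ := by
      apply Submodule.eq_top_of_finrank_eq
      rw [← range_fromColumns]
      rw [Matrix.rank] at hrank
      rw [hrank, Module.finrank_pi, Fintype.card_fin]
    obtain ⟨w, hw, b, hb, hsum⟩ := Submodule.mem_sup.mp
      (htop ▸ Submodule.mem_top (x := fun i => S⁻¹ i j))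
    set p : K[X] := ∏ l ∈ Finset.univ.erase j, (X - C (D l l)) with hp
    have hpμ : p.eval (D j j) ≠ 0 := by
      rw [hp, eval_prod]
      apply Finset.prod_ne_zero_iff.mpr
      intro l hl
      simp only [eval_sub, eval_X, eval_C]
      exact sub_ne_zero_of_ne (Ne.symm (hsimple l (Finset.ne_of_mem_erase hl)))
    have hqmul : (Polynomial.aeval A p) * (A - D j j • (1 : Matrix (Fin n) (Fin n) K)) = 0 := by
      have h2 : (Polynomial.aeval A) (X - C (D j j)) = A - D j j • 1 := by
        rw [map_sub, aeval_X, aeval_C, Algebra.algebraMap_eq_smul_one]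
      rw [← h2, ← _root_.map_mul]
      have h3 : p * (X - C (D j j)) = A.charpoly := by
        rw [hchar, hp]
        exact Finset.prod_erase_mul Finset.univ _ (Finset.mem_univ j)
      rw [h3, aeval_self_charpoly]
    have hw0 : (Polynomial.aeval A p) *ᵥ w = 0 := by
      obtain ⟨z, hz⟩ := hw
      rw [← hz, mulVecLin_apply, mulVec_mulVec, hqmul, zero_mulVec]
    -- q *ᵥ b is in the controllable range
    have hdeg : p.natDegree < n := by
      have h4 : p.natDegree ≤ ∑ l ∈ Finset.univ.erase j, (X - C (D l l)).natDegree :=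
        natDegree_prod_le _ _
      simp only [natDegree_X_sub_C, Finset.sum_const, smul_eq_mul, mul_one] at h4
      rw [Finset.card_erase_of_mem (Finset.mem_univ j), Finset.card_univ, Fintype.card_fin] at h4
      exact lt_of_le_of_lt h4 (Nat.sub_lt j.pos Nat.one_pos)
    have hqb : (Polynomial.aeval A p) *ᵥ b ∈ LinearMap.range (ctrb A B).mulVecLin := by
      obtain ⟨y, hy⟩ := hb
      rw [aeval_eq_sum_range' hdeg, ← hy, mulVecLin_apply, sum_mulVec]
      apply Submodule.sum_mem
      intro i hi
      rw [smul_mulVec, mulVec_mulVec]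
      exact Submodule.smul_mem _ _ (mem_range_ctrb A B ⟨i, Finset.mem_range.mp hi⟩ y)
    have hqv : (Polynomial.aeval A p) *ᵥ (fun i => S⁻¹ i j)
        = p.eval (D j j) • (fun i => S⁻¹ i j) := eig_aeval_mulVec (heig j) p
    have hmem : p.eval (D j j) • (fun i => S⁻¹ i j)
        ∈ LinearMap.range (ctrb A B).mulVecLin := by
      rw [← hqv, show (fun i => S⁻¹ i j) = w + b from hsum.symm, mulVec_add, hw0, zero_add]
      exact hqb
    have hvmem : (fun i => S⁻¹ i j) ∈ LinearMap.range (ctrb A B).mulVecLin := by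
      have h5 := Submodule.smul_mem _ (p.eval (D j j))⁻¹ hmem
      rwa [smul_smul, inv_mul_cancel₀ hpμ, one_smul] at h5
    exact Submodule.smul_mem _ _ hvmem
  -- assemble
  have hSD : ∀ i j, (S⁻¹ * D) i j = S⁻¹ i j * D j j := by
    intro i j
    rw [mul_apply]
    apply Finset.sum_eq_single j
    · intro k _ hk
      rw [hdiag hk, mul_zero]
    · simp
  have hAv : A *ᵥ v = ∑ j : Fin n, (S *ᵥ v) j • (D j j • (fun i => S⁻¹ i j)) := by
    have hv : A *ᵥ v = (S⁻¹ * D) *ᵥ (S *ᵥ v) := by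
      conv_lhs => rw [show v = S⁻¹ *ᵥ (S *ᵥ v) by rw [mulVec_mulVec, hTS, one_mulVec]]
      rw [mulVec_mulVec, hAT]
    rw [hv]
    ext i
    simp only [mulVec, dotProduct, hSD, Finset.sum_apply, Pi.smul_apply, smul_eq_mul]
    exact Finset.sum_congr rfl (fun j _ => by ring)
  rw [hAv]
  exact Submodule.sum_mem _ (fun j _ => Submodule.smul_mem _ _ (hcol j))

/-- transfer of range membership from the complexification back to ℝ -/
lemma real_mem_of_complex {a : ℕ} {ι : Type*} [Fintype ι] (M : Matrix (Fin a) ι ℝ) (u : Fin a → ℝ)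
    (h : (fun i => (u i : ℂ)) ∈ LinearMap.range (M.map (fun x => (x : ℂ))).mulVecLin) :
    u ∈ LinearMap.range M.mulVecLin := by
  obtain ⟨z, hz⟩ := h
  refine ⟨fun t => (z t).re, ?_⟩
  ext i
  have h1 := congrFun hz i
  simp only [mulVecLin_apply, mulVec, dotProduct, map_apply] at h1 ⊢
  have h2 := congrArg Complex.re h1
  rw [Complex.re_sum] at h2
  simpa [Complex.mul_re] using h2

lemma map_pow_mul {a b : ℕ} (M : Matrix (Fin a) (Fin a) ℝ) (N : Matrix (Fin a) (Fin b) ℝ)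
    (k : ℕ) :
    (M ^ k * N).map (fun x => (x : ℂ))
      = (M.map (fun x => (x : ℂ))) ^ k * N.map (fun x => (x : ℂ)) := by
  have h0 : (fun x : ℝ => (x : ℂ)) = ⇑Complex.ofRealHom := rfl
  have h1 : ∀ (j : ℕ), (M ^ j).map (fun x : ℝ => (x : ℂ))
      = (M.map (fun x : ℝ => (x : ℂ))) ^ j := by
    intro j
    induction j with
    | zero => simp [h0, Matrix.map_one]
    | succ t ih => rw [pow_succ, pow_succ, h0, Matrix.map_mul, ← h0, ih]
  rw [h0, Matrix.map_mul, ← h0, h1]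

lemma ctrb_map (A : Matrix (Fin n) (Fin n) ℝ) (B : Matrix (Fin n) (Fin m) ℝ) :
    (ctrb A B).map (fun x => (x : ℂ))
      = ctrb (A.map (fun x => (x : ℂ))) (B.map (fun x => (x : ℂ))) := by
  ext i kj
  have := congrFun (congrFun (map_pow_mul A B kj.1) i) kj.2
  simpa [ctrb] using this

theorem main_thm
    {n m : ℕ} (A : Matrix (Fin n) (Fin n) ℝ) (B : Matrix (Fin n) (Fin m) ℝ)
    (hdiag : ∃ S : Matrix (Fin n) (Fin n) ℂ, IsUnit S ∧
      (S * A.map (fun x => (x : ℂ)) * S⁻¹).IsDiag)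
    (hev : ∀ μ : ℂ, μ ≠ 0 → (A.map (fun x => (x : ℂ))).charpoly.IsRoot μ →
      (A.map (fun x => (x : ℂ))).charpoly.rootMultiplicity μ = 1 ∧
      (Matrix.fromCols (A.map (fun x => (x : ℂ)) - μ • (1 : Matrix (Fin n) (Fin n) ℂ))
        (B.map (fun x => (x : ℂ)))).rank = n) :
    (ctrb A B).rank = (Matrix.fromCols A B).rank := by
  rcases Nat.eq_zero_or_pos n with hn | hn
  · subst hn
    have h1 : (ctrb A B).rank ≤ 0 := by
      simpa using (ctrb A B).rank_le_card_height
    have h2 : (fromCols A B).rank ≤ 0 := by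
      simpa using (fromCols A B).rank_le_card_height
    omega
  obtain ⟨S, hS, hSdiag⟩ := hdiag
  have hrange : LinearMap.range (ctrb A B).mulVecLin
      = LinearMap.range (fromCols A B).mulVecLin := by
    rw [range_fromColumns]
    apply le_antisymm
    · rintro _ ⟨x, rfl⟩
      rw [mulVecLin_apply, ctrb_mulVec]
      apply Submodule.sum_mem
      rintro ⟨kv, hk⟩ -
      cases kv with
      | zero =>
          apply Submodule.mem_sup_right
          refine ⟨fun j => x (⟨0, hk⟩, j), ?_⟩
          simp
      | succ t =>
          apply Submodule.mem_sup_left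
          refine ⟨(A ^ t * B) *ᵥ (fun j => x (⟨t + 1, hk⟩, j)), ?_⟩
          have hAB : A * (A ^ t * B) = A ^ (t + 1) * B := by
            rw [pow_succ', Matrix.mul_assoc]
          rw [mulVecLin_apply, mulVec_mulVec, hAB]
    · rw [sup_le_iff]
      constructor
      · rintro _ ⟨v, rfl⟩
        apply real_mem_of_complex
        rw [ctrb_map]
        have hc := mulVec_mem_range_ctrb (A.map (fun x => (x : ℂ))) (B.map (fun x => (x : ℂ)))
          S hS hSdiag hev (fun t => (v t : ℂ))
        have heq : (fun i => ((A.mulVecLin v) i : ℂ))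
            = (A.map (fun x => (x : ℂ))) *ᵥ (fun t => (v t : ℂ)) := by
          ext i
          simp [mulVecLin_apply, mulVec, dotProduct, Complex.ofReal_sum]
        rw [heq]
        exact hc
      · rintro _ ⟨y, rfl⟩
        have h0 := mem_range_ctrb A B ⟨0, hn⟩ y
        simpa using h0
  rw [Matrix.rank, Matrix.rank, hrange]

end CtrbAux


/-- The controllability matrix Q(A,B) = [B, AB, …, A^{n−1}B]. -/
def ctrbMat {n m : ℕ} (A : Matrix (Fin n) (Fin n) ℝ) (B : Matrix (Fin n) (Fin m) ℝ) :
    Matrix (Fin n) (Fin n × Fin m) ℝ :=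
  Matrix.of fun i kj => (A ^ (kj.1 : ℕ) * B) i kj.2

/-- if A is diagonalizable and every nonzero eigenvalue of A is
simple and controllable for (A,B), then rank Q(A,B) = rank [A,B]. -/
theorem rank_ctrb_eq_rank_AB
    {n m : ℕ} (A : Matrix (Fin n) (Fin n) ℝ) (B : Matrix (Fin n) (Fin m) ℝ)
    (hdiag : ∃ S : Matrix (Fin n) (Fin n) ℂ, IsUnit S ∧
      (S * A.map (fun x => (x : ℂ)) * S⁻¹).IsDiag)
    (hev : ∀ μ : ℂ, μ ≠ 0 → (A.map (fun x => (x : ℂ))).charpoly.IsRoot μ →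
      (A.map (fun x => (x : ℂ))).charpoly.rootMultiplicity μ = 1 ∧
      (Matrix.fromCols (A.map (fun x => (x : ℂ)) - μ • (1 : Matrix (Fin n) (Fin n) ℂ))
        (B.map (fun x => (x : ℂ)))).rank = n) :
    (ctrbMat A B).rank = (Matrix.fromCols A B).rank := by
  have h : ctrbMat A B = CtrbAux.ctrb A B := rfl
  rw [h]
  exact CtrbAux.main_thm A B hdiag hev
end
end

section
/- Let Ā ∈ {0,*}^{n×n}, C̄ ∈ {0,*}^{p×n}, F̄ ∈ {0,*}^{r×n}, and let X_F be the set of column indices where F̄ has a nonzero entry. Then grank[Ā; C̄] = grank[Ā; C̄; F̄] if and only if grank[Ā; C̄] = grank[Ā; C̄; ē_i] for every i ∈ X_F. -/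
noncomputable section
open Matrix

/-- Vertical stacking of two structured matrices with the same column index set. -/
def stackRows {α β γ : Type*} (P : α → γ → Bool) (Q : β → γ → Bool) :
    α ⊕ β → γ → Bool :=
  fun r c => Sum.elim (fun a => P a c) (fun b => Q b c) r

/-- The unit-pattern row `ē_i`: a `*` at entry `i` and zeros elsewhere. -/
def unitRow {γ : Type*} [DecidableEq γ] (i : γ) : Unit → γ → Bool :=
  fun _ c => decide (c = i)

/-- `Ī_S`: the structured matrix stacking the unit-pattern rows `ē_i` for `i ∈ S`. -/
def indRows {γ : Type*} [DecidableEq γ] (S : Finset γ) : ↥S → γ → Bool :=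
  fun s c => decide (c = (s : γ))

open Submodule Polynomial Module
set_option linter.unusedSectionVars false
set_option linter.unusedTactic false


-- rank via row span tools
lemma rank_le_of_span_le {m m' n : Type*} [Fintype n] [Finite m] [Finite m']
    (A : Matrix m n ℝ) (B : Matrix m' n ℝ)
    (h : span ℝ (Set.range A) ≤ span ℝ (Set.range B)) : A.rank ≤ B.rank := by
  rw [Matrix.rank_eq_finrank_span_row, Matrix.rank_eq_finrank_span_row]
  exact Submodule.finrank_mono h

lemma rank_eq_of_span_eq {m m' n : Type*} [Fintype n] [Finite m] [Finite m']
    (A : Matrix m n ℝ) (B : Matrix m' n ℝ)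
    (h : span ℝ (Set.range A) = span ℝ (Set.range B)) : A.rank = B.rank :=
  le_antisymm (rank_le_of_span_le A B h.le) (rank_le_of_span_le B A h.ge)

lemma range_fromRows {m m' n : Type*} (A : Matrix m n ℝ) (B : Matrix m' n ℝ) :
    Set.range (Matrix.fromRows A B) = Set.range A ∪ Set.range B := by
  have : (Matrix.fromRows A B : m ⊕ m' → n → ℝ) = Sum.elim A B := by
    funext i; cases i <;> rfl
  rw [this]; exact Set.Sum.elim_range A B

lemma span_fromRows {m m' n : Type*} (A : Matrix m n ℝ) (B : Matrix m' n ℝ) :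
    span ℝ (Set.range (Matrix.fromRows A B)) = span ℝ (Set.range A) ⊔ span ℝ (Set.range B) := by
  rw [range_fromRows, Submodule.span_union]

lemma rank_fromRows_left {m m' n : Type*} [Fintype n] [Finite m] [Finite m']
    (A : Matrix m n ℝ) (B : Matrix m' n ℝ) : A.rank ≤ (Matrix.fromRows A B).rank := by
  refine rank_le_of_span_le _ _ ?_
  rw [span_fromRows]; exact le_sup_left

lemma rank_fromRows_of_le {m m' n : Type*} [Fintype n] [Finite m] [Finite m']
    (A : Matrix m n ℝ) (B : Matrix m' n ℝ)
    (h : span ℝ (Set.range B) ≤ span ℝ (Set.range A)) :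
    (Matrix.fromRows A B).rank = A.rank := by
  refine rank_eq_of_span_eq _ _ ?_
  rw [span_fromRows]; exact sup_eq_left.mpr h

lemma rank_submatrix_le' {m m' n n' : Type*} [Fintype n] [Fintype n'] [Fintype m] [Fintype m']
    (A : Matrix m n ℝ) (f : m' → m) (g : n' → n) :
    (A.submatrix f g).rank ≤ A.rank := by
  have h1 : (A.submatrix f id).rank ≤ A.rank := by
    refine rank_le_of_span_le _ _ (span_mono ?_)
    rintro x ⟨i, rfl⟩; exact ⟨f i, rfl⟩
  have h2 : (A.submatrix f g).rank ≤ (A.submatrix f id).rank := by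
    have := rank_le_of_span_le ((A.submatrix f id)ᵀ.submatrix g id) (A.submatrix f id)ᵀ
      (span_mono ?_)
    · rw [Matrix.rank_transpose] at this
      calc (A.submatrix f g).rank = ((A.submatrix f g)ᵀ).rank := (Matrix.rank_transpose _).symm
        _ ≤ _ := by
          rw [Matrix.transpose_submatrix]
          simpa using this
    · rintro x ⟨i, rfl⟩; exact ⟨g i, rfl⟩
  exact h2.trans h1

/-- A nonzero k×k minor gives a rank lower bound. -/
lemma le_rank_of_minor {m n : Type*} [Fintype m] [Fintype n] {k : ℕ}
    (A : Matrix m n ℝ) (f : Fin k → m) (g : Fin k → n)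
    (h : (A.submatrix f g).det ≠ 0) : k ≤ A.rank := by
  have hu : IsUnit (A.submatrix f g) := by
    rw [Matrix.isUnit_iff_isUnit_det]; exact isUnit_iff_ne_zero.mpr h
  have := Matrix.rank_of_isUnit _ hu
  have h2 := rank_submatrix_le' A f g
  simp only [this, Fintype.card_fin] at h2 ⊢
  omega

/-- From a matrix we can extract `rank` many rows that are linearly independent. -/
lemma exists_rows_linearIndependent {m n : Type*} [Fintype m] [Fintype n]
    (A : Matrix m n ℝ) (k : ℕ) (hk : k = A.rank) :
    ∃ f : Fin k → m, LinearIndependent ℝ (A.submatrix f id) := by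
  obtain ⟨b, hbsub, hbspan, hbli⟩ := exists_linearIndependent ℝ (Set.range A)
  have hfin : b.Finite := (Set.finite_range A).subset hbsub
  haveI : Fintype b := hfin.fintype
  have hcard : b.toFinset.card = k := by
    rw [hk, Matrix.rank_eq_finrank_span_row]
    change b.toFinset.card = finrank ℝ (span ℝ (Set.range A))
    rw [← hbspan, finrank_span_set_eq_card hbli]
  have e : Fin k ≃ b := by
    refine (Fintype.equivFinOfCardEq ?_).symm
    rw [← hcard]; simp [Set.toFinset_card]
  choose idx hidx using fun x : b => (hbsub x.2 : (x : n → ℝ) ∈ Set.range A)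
  refine ⟨fun j => idx (e j), ?_⟩
  have hAe : (A.submatrix (fun j => idx (e j)) id) = fun j => ((e j : b) : n → ℝ) := by
    funext j; ext c; simp [Matrix.submatrix, hidx (e j)]
  rw [hAe]
  exact hbli.comp e e.injective

lemma exists_minor_ne_zero {m n : Type*} [Fintype m] [Fintype n] [DecidableEq m] [DecidableEq n]
    (A : Matrix m n ℝ) :
    ∃ (f : Fin A.rank → m) (g : Fin A.rank → n), (A.submatrix f g).det ≠ 0 := by
  obtain ⟨f, hf⟩ := exists_rows_linearIndependent A A.rank rfl
  set B := A.submatrix f id with hB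
  have hBrank : B.rank = A.rank := by
    have := hf.rank_matrix
    exact this.trans (Fintype.card_fin _)
  have hBT : (Bᵀ).rank = A.rank := by rw [Matrix.rank_transpose, hBrank]
  obtain ⟨g, hg⟩ := exists_rows_linearIndependent Bᵀ A.rank hBT.symm
  -- Bᵀ.submatrix g id = (B.submatrix id g)ᵀ
  have key : (Bᵀ.submatrix g id) = (A.submatrix f g)ᵀ := by
    funext i j; rfl
  rw [key] at hg
  have hu : IsUnit ((A.submatrix f g)ᵀ) := Matrix.linearIndependent_rows_iff_isUnit.mp hg
  rw [Matrix.isUnit_transpose] at hu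
  exact ⟨f, g, by
    intro h0
    exact (isUnit_iff_ne_zero.mp (Matrix.isUnit_iff_isUnit_det _ |>.mp hu)) h0⟩

/-- Key genericity lemma: for two polynomial families of matrices, there is a common
parameter value where both ranks are at least their values at given parameters. -/
lemma exists_param_rank_ge {m n m' n' : Type*} [Fintype m] [Fintype n] [DecidableEq m] [DecidableEq n]
    [Fintype m'] [Fintype n'] [DecidableEq m'] [DecidableEq n']
    (F : Matrix m n ℝ[X]) (G : Matrix m' n' ℝ[X]) (s₁ s₂ : ℝ) :
    ∃ t : ℝ, (F.map (eval s₁)).rank ≤ (F.map (eval t)).rank ∧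
      (G.map (eval s₂)).rank ≤ (G.map (eval t)).rank := by
  obtain ⟨f₁, g₁, hd₁⟩ := exists_minor_ne_zero (F.map (eval s₁))
  obtain ⟨f₂, g₂, hd₂⟩ := exists_minor_ne_zero (G.map (eval s₂))
  set q : ℝ[X] := (F.submatrix f₁ g₁).det with hq
  set p : ℝ[X] := (G.submatrix f₂ g₂).det with hp
  have hev : ∀ (s : ℝ), eval s q = ((F.map (eval s)).submatrix f₁ g₁).det := by
    intro s
    rw [Matrix.submatrix_map (eval s) f₁ g₁ F]
    simpa using RingHom.map_det (evalRingHom s) (F.submatrix f₁ g₁)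
  have hev' : ∀ (s : ℝ), eval s p = ((G.map (eval s)).submatrix f₂ g₂).det := by
    intro s
    rw [Matrix.submatrix_map (eval s) f₂ g₂ G]
    simpa using RingHom.map_det (evalRingHom s) (G.submatrix f₂ g₂)
  have hqne : q ≠ 0 := fun h => hd₁ (by rw [← hev s₁, h, eval_zero])
  have hpne : p ≠ 0 := fun h => hd₂ (by rw [← hev' s₂, h, eval_zero])
  have hpq : p * q ≠ 0 := mul_ne_zero hpne hqne
  obtain ⟨t, ht⟩ : ∃ t : ℝ, eval t (p * q) ≠ 0 := by
    by_contra hc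
    push_neg at hc
    exact hpq (Polynomial.funext fun t => by simpa using hc t)
  rw [eval_mul] at ht
  refine ⟨t, ?_, ?_⟩
  · exact le_rank_of_minor _ f₁ g₁ (by rw [← hev]; exact right_ne_zero_of_mul ht)
  · exact le_rank_of_minor _ f₂ g₂ (by rw [← hev']; exact left_ne_zero_of_mul ht)

section Basics
variable {α β γ : Type*} [Fintype γ]

lemma grank_bddAbove (P : α → γ → Bool) :
    BddAbove {r | ∃ θ, (toMat P θ).rank = r} := by
  refine ⟨Fintype.card γ, fun r hr => ?_⟩
  obtain ⟨θ, rfl⟩ := hr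
  exact Matrix.rank_le_card_width _

lemma rank_le_grank (P : α → γ → Bool) (θ) : (toMat P θ).rank ≤ grank P :=
  le_csSup (grank_bddAbove P) ⟨θ, rfl⟩

lemma exists_grank (P : α → γ → Bool) : ∃ θ, (toMat P θ).rank = grank P := by
  have h : {r | ∃ θ, (toMat P θ).rank = r}.Nonempty :=
    ⟨(toMat P (fun _ => 0)).rank, fun _ => 0, rfl⟩
  exact Nat.sSup_mem h (grank_bddAbove P)

variable {P : α → γ → Bool} {Q : β → γ → Bool}

def splitL (θ : {ij : (α ⊕ β) × γ // stackRows P Q ij.1 ij.2 = true} → ℝ) :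
    {ij : α × γ // P ij.1 ij.2 = true} → ℝ :=
  fun s => θ ⟨(Sum.inl s.1.1, s.1.2), s.2⟩

def splitR (θ : {ij : (α ⊕ β) × γ // stackRows P Q ij.1 ij.2 = true} → ℝ) :
    {ij : β × γ // Q ij.1 ij.2 = true} → ℝ :=
  fun s => θ ⟨(Sum.inr s.1.1, s.1.2), s.2⟩

def joinP (θ₁ : {ij : α × γ // P ij.1 ij.2 = true} → ℝ)
    (θ₂ : {ij : β × γ // Q ij.1 ij.2 = true} → ℝ) :
    {ij : (α ⊕ β) × γ // stackRows P Q ij.1 ij.2 = true} → ℝ :=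
  fun s => match s with
  | ⟨(Sum.inl a, c), h⟩ => θ₁ ⟨(a, c), h⟩
  | ⟨(Sum.inr b, c), h⟩ => θ₂ ⟨(b, c), h⟩

lemma toMat_stack (θ) :
    toMat (stackRows P Q) θ = Matrix.fromRows (toMat P (splitL θ)) (toMat Q (splitR θ)) := by
  ext i c; cases i <;> rfl

lemma toMat_join (θ₁) (θ₂) :
    toMat (stackRows P Q) (joinP θ₁ θ₂) = Matrix.fromRows (toMat P θ₁) (toMat Q θ₂) := by
  ext i c; cases i <;> rfl

lemma toMat_zero (Q : β → γ → Bool) : toMat Q (fun _ => 0) = 0 := by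
  ext b c; simp [toMat]

lemma grank_le_grank_stack [Finite α] [Finite β] : grank P ≤ grank (stackRows P Q) := by
  obtain ⟨θ, hθ⟩ := exists_grank P
  have h : (toMat (stackRows P Q) (joinP θ (fun _ => 0))).rank = grank P := by
    rw [toMat_join, toMat_zero]
    rw [rank_fromRows_of_le _ _ ?_, hθ]
    refine span_le.mpr ?_
    rintro x ⟨i, rfl⟩
    exact zero_mem _
  exact h ▸ rank_le_grank _ _
end Basics

section More
open Polynomial Module

lemma mem_span_of_rank_fromRows_le {m n : Type*} [Fintype n] [Finite m]
    (M : Matrix m n ℝ) (v : n → ℝ)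
    (h : (Matrix.fromRows M (Matrix.of fun _ : Unit => v)).rank ≤ M.rank) :
    v ∈ span ℝ (Set.range M) := by
  set V : Matrix Unit n ℝ := Matrix.of fun _ => v with hV
  have hle : span ℝ (Set.range M) ≤ span ℝ (Set.range (Matrix.fromRows M V)) := by
    rw [span_fromRows]; exact le_sup_left
  have hfr : finrank ℝ (span ℝ (Set.range (Matrix.fromRows M V)))
      ≤ finrank ℝ (span ℝ (Set.range M)) := by
    rw [Matrix.rank_eq_finrank_span_row, Matrix.rank_eq_finrank_span_row] at h
    exact h
  have heq := eq_of_le_of_finrank_le hle hfr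
  rw [heq]
  exact subset_span ⟨Sum.inr (), rfl⟩

lemma F_eval {α γ : Type*} (P : α → γ → Bool) (θ0 θ1) (t : ℝ) :
    (Matrix.of fun a c =>
        C (toMat P θ0 a c) + X * C (toMat P θ1 a c - toMat P θ0 a c)).map (eval t)
      = toMat P (fun s => θ0 s + t * (θ1 s - θ0 s)) := by
  ext a c
  simp only [Matrix.map_apply, Matrix.of_apply, eval_add, eval_mul, eval_C, eval_X, toMat]
  by_cases hp : P a c = true
  · simp [hp]
  · simp [hp]

lemma fromRows_map {m m' n R S : Type*} (A : Matrix m n R) (B : Matrix m' n R) (f : R → S) :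
    (Matrix.fromRows A B).map f = Matrix.fromRows (A.map f) (B.map f) := by
  ext i c; cases i <;> rfl

lemma map_C_eval {m n : Type*} (N : Matrix m n ℝ) (t : ℝ) :
    (N.map C).map (eval t) = N := by
  ext i c; simp [Matrix.map_apply]

lemma toMat_unitRow {γ : Type*} [DecidableEq γ] (i : γ) (θu) :
    toMat (unitRow i) θu
      = Matrix.of fun _ c =>
          if c = i then θu ⟨((), i), by simp [unitRow]⟩ else 0 := by
  ext u c
  by_cases h : c = i
  · subst h; cases u; simp [toMat, unitRow]
  · simp [toMat, unitRow, h]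
end More


/-- grank[Ā; C̄] = grank[Ā; C̄; F̄] iff grank[Ā; C̄] = grank[Ā; C̄; ē_i]
for every i ∈ X_F (the set of nonzero columns of F̄). -/
theorem grank_with_F_iff_unit_rows
    {n p r : ℕ} (PA : Fin n → Fin n → Bool) (PC : Fin p → Fin n → Bool)
    (PF : Fin r → Fin n → Bool) :
    grank (stackRows (stackRows PA PC) PF) = grank (stackRows PA PC) ↔
      ∀ i : Fin n, (∃ k : Fin r, PF k i = true) →
        grank (stackRows (stackRows PA PC) (unitRow i)) = grank (stackRows PA PC) := by
  set P := stackRows PA PC with hP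
  constructor
  · rintro h i ⟨k, hk⟩
    refine le_antisymm ?_ grank_le_grank_stack
    obtain ⟨θ, hθ⟩ := exists_grank (stackRows P (unitRow i))
    set M := toMat P (splitL θ) with hM
    set U := toMat (unitRow i) (splitR θ) with hU
    have hui : unitRow i () i = true := by simp [unitRow]
    set tval := splitR θ ⟨((), i), hui⟩ with htval
    set θF : {ij : Fin r × Fin n // PF ij.1 ij.2 = true} → ℝ :=
      fun s => if s.1.1 = k ∧ s.1.2 = i then tval else 0 with hθF
    set NF := toMat PF θF with hNF
    have claim1 : NF k = U () := by
      funext c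
      by_cases hc : c = i
      · subst hc; simp [hNF, hU, toMat, unitRow, hk, hθF]; rfl
      · simp [hNF, hU, toMat, unitRow, hc, hθF]
    have claim2 : ∀ k', k' ≠ k → NF k' = 0 := by
      intro k' hk'
      funext c
      by_cases hc : c = i
      · subst hc; simp [hNF, toMat, hθF, hk']
      · simp [hNF, toMat, hθF, hc]
    have hspan : span ℝ (Set.range NF) = span ℝ (Set.range U) := by
      apply le_antisymm
      · refine span_le.mpr ?_
        rintro x ⟨k', rfl⟩
        by_cases hk' : k' = k
        · subst hk'; rw [claim1]; exact subset_span ⟨(), rfl⟩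
        · rw [claim2 k' hk']; exact zero_mem _
      · refine span_le.mpr ?_
        rintro x ⟨u, rfl⟩
        cases u
        rw [← claim1]; exact subset_span ⟨k, rfl⟩
    have e1 : grank (stackRows P (unitRow i)) = (Matrix.fromRows M U).rank := by
      rw [← hθ, toMat_stack]
    have e2 : (Matrix.fromRows M U).rank = (Matrix.fromRows M NF).rank := by
      apply rank_eq_of_span_eq
      rw [span_fromRows, span_fromRows, hspan]
    have e3 : (Matrix.fromRows M NF).rank ≤ grank (stackRows P PF) := by
      rw [← toMat_join]
      exact rank_le_grank _ _
    rw [e1, e2]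
    exact e3.trans_eq h
  · intro h
    refine le_antisymm ?_ grank_le_grank_stack
    obtain ⟨Θ, hΘ⟩ := exists_grank (stackRows P PF)
    obtain ⟨θs, hθs⟩ := exists_grank P
    set θ0 := splitL Θ with hθ0
    set N := toMat PF (splitR Θ) with hN
    set F : Matrix (Fin n ⊕ Fin p) (Fin n) (Polynomial ℝ) := Matrix.of fun a c =>
      Polynomial.C (toMat P θ0 a c) +
        Polynomial.X * Polynomial.C (toMat P θs a c - toMat P θ0 a c) with hF
    obtain ⟨t, ht1, ht2⟩ := exists_param_rank_ge F
      (Matrix.fromRows F (N.map Polynomial.C)) 1 0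
    set θt := fun s => θ0 s + t * (θs s - θ0 s) with hθt
    have hFt : F.map (Polynomial.eval t) = toMat P θt := F_eval P θ0 θs t
    have hF1 : F.map (Polynomial.eval 1) = toMat P θs := by
      rw [hF, F_eval]; congr 1; funext s; ring
    have hF0 : F.map (Polynomial.eval 0) = toMat P θ0 := by
      rw [hF, F_eval]; congr 1; funext s; ring
    have hG : ∀ s : ℝ, (Matrix.fromRows F (N.map Polynomial.C)).map (Polynomial.eval s)
        = Matrix.fromRows (F.map (Polynomial.eval s)) N := by
      intro s; rw [_root_.fromRows_map, map_C_eval]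
    have hMt : (toMat P θt).rank = grank P := by
      refine le_antisymm (rank_le_grank _ _) ?_
      rw [← hθs, ← hF1, ← hFt]; exact ht1
    have herow : ∀ c : Fin n, (∃ k, PF k c = true) →
        (fun j => if c = j then (1:ℝ) else 0) ∈ span ℝ (Set.range (toMat P θt)) := by
      intro c hc
      apply mem_span_of_rank_fromRows_le
      have hone : (Matrix.of fun _ : Unit => fun j => if c = j then (1:ℝ) else 0)
          = toMat (unitRow c) (fun _ => 1) := by
        rw [toMat_unitRow]
        ext u j
        by_cases hj : j = c
        · subst hj; simp
        · simp [hj, Ne.symm hj]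
      rw [hone, ← toMat_join]
      calc (toMat (stackRows P (unitRow c)) (joinP θt fun _ => 1)).rank
          ≤ grank (stackRows P (unitRow c)) := rank_le_grank _ _
        _ = grank P := h c hc
        _ = (toMat P θt).rank := hMt.symm
    have hNspan : span ℝ (Set.range N) ≤ span ℝ (Set.range (toMat P θt)) := by
      refine span_le.mpr ?_
      rintro x ⟨k, rfl⟩
      have hx : N k = ∑ c : Fin n, N k c • fun j => if c = j then (1:ℝ) else 0 :=
        pi_eq_sum_univ (N k)
      rw [hx]
      refine sum_mem fun c _ => ?_
      by_cases hzero : N k c = 0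
      · rw [hzero]; simp only [zero_smul]; exact zero_mem _
      · have hpf : PF k c = true := by
          by_contra hpf
          exact hzero (by simp [hN, toMat, hpf])
        exact smul_mem _ _ (herow c ⟨k, hpf⟩)
    calc grank (stackRows P PF) = (Matrix.fromRows (toMat P θ0) N).rank := by
          rw [← hΘ, toMat_stack]
      _ ≤ (Matrix.fromRows (toMat P θt) N).rank := by
          rw [← hF0, ← hFt, ← hG 0, ← hG t]; exact ht2
      _ = (toMat P θt).rank := rank_fromRows_of_le _ _ hNspan
      _ = grank P := hMt
end
end
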